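/- arXiv:1406.2743 — 6 statements merged into one kernel-verified Lean document; each statement's English description precedes it below -/
import Mathlib

section
/- Let n ≥ 1 and let Ω ⊆ ℝ^{n+1} be an open set which is (c,C)-uniform, whose boundary ∂Ω is n-dimensional Ahlfors–David regular with constant C_A, and such that for every ε > 0 there is a constant C₁(ε) for which ∂Ω satisfies the bilateral weak geometric lemma at level ε with constant C₁(ε). Then Ω satisfies the exterior corkscrew condition: there exists c₀ ∈ (0,1), depending only on n, c, C, C_A and the function ε ↦ C₁(ε), such that for every x ∈ ∂Ω and every 0 < r < diam ∂Ω there is a point X⁻ with B(X⁻, c₀ r) ⊆ B(x,r) \ closure(Ω). (Consequently Ω is an NTA, and hence chord-arc, domain.) -/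
open Metric Set MeasureTheory
open scoped RealInnerProductSpace ENNReal

noncomputable section

/-- The ambient Euclidean space `ℝ^{n+1}`. -/
abbrev V (n : ℕ) := EuclideanSpace ℝ (Fin (n + 1))

/-- `Ω` is a `(c,C)`-uniform domain: any two points of `Ω` are joined by a rectifiable
curve in `Ω` of length at most `C` times their distance, every point `Z` of which satisfies
`dist(Z, ∂Ω) ≥ c · min(|Z-X|, |Z-Y|)`. -/
def IsUniform {n : ℕ} (c C : ℝ) (Ω : Set (V n)) : Prop :=
  ∀ X ∈ Ω, ∀ Y ∈ Ω, ∃ γ : ℝ → V n,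
    ContinuousOn γ (Set.Icc 0 1) ∧ γ 0 = X ∧ γ 1 = Y ∧
    (∀ t ∈ Set.Icc (0 : ℝ) 1, γ t ∈ Ω) ∧
    eVariationOn γ (Set.Icc 0 1) ≤ ENNReal.ofReal (C * dist X Y) ∧
    ∀ t ∈ Set.Icc (0 : ℝ) 1,
      c * min (dist (γ t) X) (dist (γ t) Y) ≤ Metric.infDist (γ t) (frontier Ω)

/-- The bilateral beta number `bβ_E(x,r,P)` of a set `E` with respect to a set `P`
(usually a hyperplane), at location `x` and scale `r`. -/
def bbeta {n : ℕ} (E P : Set (V n)) (x : V n) (r : ℝ) : ℝ :=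
  r⁻¹ * ((⨆ y : ↥(E ∩ Metric.ball x r), Metric.infDist (y : V n) P) +
         (⨆ y : ↥(P ∩ Metric.ball x r), Metric.infDist (y : V n) E))

/-- `P` is an affine hyperplane of `ℝ^{n+1}`: the zero set of `p ↦ ⟪p - a, v⟫` for some
unit vector `v` and point `a`. -/
def IsAffineHyperplane {n : ℕ} (P : Set (V n)) : Prop :=
  ∃ v a : V n, ‖v‖ = 1 ∧ P = {p : V n | ⟪p - a, v⟫ = 0}

/-- `bβ_E(x,r)`: the infimum of `bβ_E(x,r,P)` over all affine hyperplanes `P`. -/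
def bbetaInf {n : ℕ} (E : Set (V n)) (x : V n) (r : ℝ) : ℝ :=
  ⨅ P : {P : Set (V n) // IsAffineHyperplane P}, bbeta E (P : Set (V n)) x r

/-- `E` is `n`-dimensional Ahlfors–David regular with constant `C_A`:
`C_A⁻¹ rⁿ ≤ H^n(E ∩ B(x,r)) ≤ C_A rⁿ` for all `x ∈ E` and `0 < r < diam E`. -/
def IsADR (n : ℕ) (E : Set (V n)) (CA : ℝ) : Prop :=
  ∀ x ∈ E, ∀ r : ℝ, 0 < r → ENNReal.ofReal r < EMetric.diam E →
    ENNReal.ofReal (CA⁻¹ * r ^ n) ≤ μH[(n : ℝ)] (E ∩ Metric.ball x r) ∧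
    μH[(n : ℝ)] (E ∩ Metric.ball x r) ≤ ENNReal.ofReal (CA * r ^ n)

/-- `E` satisfies the bilateral weak geometric lemma at level `ε` with constant `C₁`:
the set `B̂_ε = {(y,t) : y ∈ E, t > 0, bβ_E(y,t) ≥ ε}` is a Carleson set, i.e.
`∫∫_{B̂_ε ∩ (B(x,r) × (0,r))} dH^n(y) dt/t ≤ C₁ rⁿ` for all `x ∈ E`, `r > 0`. -/
def BWGL (n : ℕ) (E : Set (V n)) (ε C₁ : ℝ) : Prop :=
  ∀ x ∈ E, ∀ r : ℝ, 0 < r →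
    (∫⁻ y in E ∩ Metric.ball x r,
        (∫⁻ t in {t : ℝ | t ∈ Set.Ioo 0 r ∧ ε ≤ bbetaInf E y t}, ENNReal.ofReal t⁻¹)
        ∂(μH[(n : ℝ)])) ≤ ENNReal.ofReal (C₁ * r ^ n)

/-! ### Auxiliary lemmas -/

lemma le_infDist_of_forall {α : Type*} [MetricSpace α] {s : Set α} (hs : s.Nonempty)
    {x : α} {b : ℝ} (h : ∀ y ∈ s, b ≤ dist x y) : b ≤ Metric.infDist x s := by
  by_contra hb
  push_neg at hb
  obtain ⟨y, hy, hd⟩ := (Metric.infDist_lt_iff hs).mp hb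
  exact absurd (h y hy) (not_le.mpr hd)

lemma hyper_inner_le_dist {n : ℕ} (v a z p : V n) (hv : ‖v‖ = 1)
    (hp : ⟪p - a, v⟫ = 0) : |⟪z - a, v⟫| ≤ dist z p := by
  have h1 : ⟪z - a, v⟫ = ⟪z - p, v⟫ := by
    have h2 : (z - p) + (p - a) = z - a := by abel
    rw [← h2, inner_add_left, hp, add_zero]
  rw [h1]
  calc |⟪z - p, v⟫| ≤ ‖z - p‖ * ‖v‖ := abs_real_inner_le_norm _ _
    _ = dist z p := by rw [hv, mul_one, dist_eq_norm]

lemma lintegral_inv_Ioo_ge {a b : ℝ} (ha : 0 < a) (hab : a ≤ b) :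
    ENNReal.ofReal (Real.log (b / a)) ≤ ∫⁻ t in Set.Ioo a b, ENNReal.ofReal t⁻¹ := by
  have hint : IntegrableOn (fun t : ℝ => t⁻¹) (Set.Ioo a b) := by
    have hc : ContinuousOn (fun t : ℝ => t⁻¹) (Set.Icc a b) := by
      apply ContinuousOn.inv₀ continuousOn_id
      intro x hx
      exact ne_of_gt (lt_of_lt_of_le ha hx.1)
    exact (hc.integrableOn_Icc).mono_set Set.Ioo_subset_Icc_self
  have hnn : 0 ≤ᵐ[volume.restrict (Set.Ioo a b)] fun t : ℝ => t⁻¹ := by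
    refine ae_restrict_of_forall_mem measurableSet_Ioo ?_
    intro t ht
    exact inv_nonneg.mpr (le_of_lt (lt_of_lt_of_le ha ht.1.le))
  have heq := ofReal_integral_eq_lintegral_ofReal hint hnn
  rw [← heq]
  apply ENNReal.ofReal_le_ofReal
  have h3 : ∫ t in Set.Ioo a b, t⁻¹ = Real.log (b / a) := by
    rw [← MeasureTheory.integral_Ioc_eq_integral_Ioo, ← intervalIntegral.integral_of_le hab]
    apply integral_inv
    intro h
    rcases Set.mem_uIcc.mp h with ⟨h1, _⟩ | ⟨h2, _⟩
    · exact absurd h1 (not_le.mpr ha)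
    · exact absurd h2 (not_le.mpr (ha.trans_le hab))
  rw [h3]

set_option maxHeartbeats 1000000 in
/-- Let `Ω ⊆ ℝ^{n+1}` (`n ≥ 1`) be an open `(c,C)`-uniform set whose
boundary is `n`-ADR with constant `C_A` and satisfies, for every `ε > 0`, the BWGL at
level `ε` with constant `C₁(ε)`.  Then `Ω` satisfies the exterior corkscrew condition:
there is `c₀ ∈ (0,1)`, depending only on `n, c, C, C_A` and `ε ↦ C₁(ε)`, such that for
every `x ∈ ∂Ω` and `0 < r < diam ∂Ω` there is `X⁻` with
`B(X⁻, c₀ r) ⊆ B(x,r) \ closure Ω`. -/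
theorem statement0 (n : ℕ) (hn : 1 ≤ n) (c C CA : ℝ) (C₁ : ℝ → ℝ)
    (hc₀ : 0 < c) (hc₁ : c < 1) (hC : 1 < C) (hCA : 1 ≤ CA) :
    ∃ c₀ : ℝ, 0 < c₀ ∧ c₀ < 1 ∧
      ∀ Ω : Set (V n), IsOpen Ω → IsUniform c C Ω →
        IsADR n (frontier Ω) CA →
        (∀ ε : ℝ, 0 < ε → BWGL n (frontier Ω) ε (C₁ ε)) →
        ∀ x ∈ frontier Ω, ∀ r : ℝ, 0 < r →
          ENNReal.ofReal r < EMetric.diam (frontier Ω) →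
          ∃ Xm : V n, Metric.ball Xm (c₀ * r) ⊆ Metric.ball x r \ closure Ω := by
  have hC0 : (0:ℝ) < C := lt_trans one_pos hC
  have hCA0 : (0:ℝ) < CA := lt_of_lt_of_le one_pos hCA
  set ε : ℝ := c / (100 * C) with hεdef
  have hε : 0 < ε := div_pos hc₀ (by positivity)
  set M : ℝ := max (C₁ ε) 0 with hMdef
  have hM0 : 0 ≤ M := le_max_right _ _
  set σ : ℝ := Real.exp (-(CA * (M + 1))) with hσdef
  have hσ0 : 0 < σ := Real.exp_pos _
  have hσ1 : σ < 1 := by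
    calc σ = Real.exp (-(CA * (M + 1))) := hσdef
      _ < Real.exp 0 := Real.exp_lt_exp.mpr (by nlinarith)
      _ = 1 := Real.exp_zero
  refine ⟨σ / (32 * C), by positivity, ?_, ?_⟩
  · rw [div_lt_one (by positivity)]
    nlinarith
  intro Ω hΩ hUnif hADR hBWGL x hx r hr hrdiam
  set E := frontier Ω with hEdef
  have hxE : x ∈ E := hx
  set R : ℝ := r / 2 with hRdef
  have hR : 0 < R := by positivity
  have hEclosed : IsClosed E := isClosed_frontier
  have hplane : Nonempty {P : Set (V n) // IsAffineHyperplane P} := by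
    refine ⟨⟨{p : V n | ⟪p - 0, EuclideanSpace.single 0 1⟫ = 0},
      EuclideanSpace.single 0 1, 0, ?_, rfl⟩⟩
    simp [EuclideanSpace.norm_single]
  -- Step A: find a flat pair (y, t)
  have hkey : ∃ y ∈ E ∩ ball x R, ∃ t, t ∈ Set.Ioo (σ * R) R ∧ bbetaInf E y t < ε := by
    by_contra hcon
    push_neg at hcon
    have hBW := hBWGL ε hε x hxE R hR
    have hmeas : MeasurableSet (E ∩ ball x R) :=
      hEclosed.measurableSet.inter measurableSet_ball
    have hinner : ∀ y ∈ E ∩ ball x R,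
        ENNReal.ofReal (CA * (M + 1)) ≤
          ∫⁻ t in {t : ℝ | t ∈ Set.Ioo 0 R ∧ ε ≤ bbetaInf E y t}, ENNReal.ofReal t⁻¹ := by
      intro y hy
      have hsub : Set.Ioo (σ * R) R ⊆ {t : ℝ | t ∈ Set.Ioo 0 R ∧ ε ≤ bbetaInf E y t} := by
        intro t ht
        exact ⟨⟨lt_trans (by positivity) ht.1, ht.2⟩, hcon y hy t ht⟩
      have h1 : ENNReal.ofReal (Real.log (R / (σ * R))) ≤
          ∫⁻ t in Set.Ioo (σ * R) R, ENNReal.ofReal t⁻¹ :=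
        lintegral_inv_Ioo_ge (by positivity) (by nlinarith)
      have h2 : Real.log (R / (σ * R)) = CA * (M + 1) := by
        rw [show R / (σ * R) = σ⁻¹ by rw [mul_comm, ← div_div, div_self hR.ne', one_div], Real.log_inv, hσdef, Real.log_exp]
        ring
      calc ENNReal.ofReal (CA * (M + 1))
          = ENNReal.ofReal (Real.log (R / (σ * R))) := by rw [h2]
        _ ≤ ∫⁻ t in Set.Ioo (σ * R) R, ENNReal.ofReal t⁻¹ := h1
        _ ≤ _ := lintegral_mono_set hsub
    have hlow : ENNReal.ofReal (CA * (M + 1)) * μH[(n : ℝ)] (E ∩ ball x R) ≤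
        ∫⁻ y in E ∩ ball x R,
          (∫⁻ t in {t : ℝ | t ∈ Set.Ioo 0 R ∧ ε ≤ bbetaInf E y t}, ENNReal.ofReal t⁻¹)
          ∂(μH[(n : ℝ)]) := by
      rw [← setLIntegral_const]
      exact setLIntegral_mono' hmeas hinner
    have hADRx := (hADR x hxE R hR
      (lt_of_le_of_lt (ENNReal.ofReal_le_ofReal (by linarith)) hrdiam)).1
    have hfinal : ENNReal.ofReal (CA * (M + 1)) * ENNReal.ofReal (CA⁻¹ * R ^ n) ≤
        ENNReal.ofReal (C₁ ε * R ^ n) :=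
      le_trans (mul_le_mul_right hADRx _) (le_trans hlow hBW)
    rw [← ENNReal.ofReal_mul (by positivity)] at hfinal
    have hAB : C₁ ε * R ^ n < CA * (M + 1) * (CA⁻¹ * R ^ n) := by
      have hRn : 0 < R ^ n := pow_pos hR n
      have heq : CA * (M + 1) * (CA⁻¹ * R ^ n) = (M + 1) * R ^ n := by
        field_simp
      rw [heq]
      nlinarith [le_max_left (C₁ ε) 0]
    exact absurd hfinal (not_le.mpr ((ENNReal.ofReal_lt_ofReal_iff (by positivity)).mpr hAB))
  obtain ⟨y, hyEB, t, htI, hflat⟩ := hkey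
  have hyE : y ∈ E := hyEB.1
  have ht0 : 0 < t := lt_trans (by positivity) htI.1
  have htR : t < R := htI.2
  -- extract an almost-optimal hyperplane
  unfold bbetaInf at hflat
  obtain ⟨⟨P, hPplane⟩, hPlt⟩ := exists_lt_of_ciInf_lt hflat
  obtain ⟨v, a, hv, hPdef⟩ := hPplane
  unfold bbeta at hPlt
  set S1 : ℝ := ⨆ z : ↥(E ∩ Metric.ball y t), Metric.infDist (z : V n) P with hS1def
  set S2 : ℝ := ⨆ z : ↥(P ∩ Metric.ball y t), Metric.infDist (z : V n) E with hS2def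
  have hS1n : 0 ≤ S1 := Real.iSup_nonneg fun _ => Metric.infDist_nonneg
  have hS2n : 0 ≤ S2 := Real.iSup_nonneg fun _ => Metric.infDist_nonneg
  have hsum : S1 + S2 < ε * t := by
    have h := mul_lt_mul_of_pos_left hPlt ht0
    rw [← mul_assoc, mul_inv_cancel₀ (ne_of_gt ht0), one_mul] at h
    linarith
  have hS1lt : S1 < ε * t := by linarith
  have hS2lt : S2 < ε * t := by linarith
  have hPne : P.Nonempty := ⟨a, by rw [hPdef]; simp⟩
  have hbdd1 : BddAbove (Set.range fun z : ↥(E ∩ Metric.ball y t) =>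
      Metric.infDist (z : V n) P) := by
    refine ⟨t + Metric.infDist y P, ?_⟩
    rintro _ ⟨z, rfl⟩
    have hz := mem_ball.mp z.2.2
    calc Metric.infDist (z : V n) P ≤ Metric.infDist y P + dist (z : V n) y :=
        Metric.infDist_le_infDist_add_dist
      _ ≤ t + Metric.infDist y P := by linarith
  have hbdd2 : BddAbove (Set.range fun z : ↥(P ∩ Metric.ball y t) =>
      Metric.infDist (z : V n) E) := by
    refine ⟨t + Metric.infDist y E, ?_⟩
    rintro _ ⟨z, rfl⟩
    have hz := mem_ball.mp z.2.2
    calc Metric.infDist (z : V n) E ≤ Metric.infDist y E + dist (z : V n) y :=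
        Metric.infDist_le_infDist_add_dist
      _ ≤ t + Metric.infDist y E := by linarith
  have hE1 : ∀ z ∈ E ∩ Metric.ball y t, |⟪z - a, v⟫| < ε * t := by
    intro z hz
    have h1 : |⟪z - a, v⟫| ≤ Metric.infDist z P := by
      apply le_infDist_of_forall hPne
      intro p hp
      exact hyper_inner_le_dist v a z p hv (by rw [hPdef] at hp; exact hp)
    have h2 : Metric.infDist z P ≤ S1 := le_ciSup hbdd1 ⟨z, hz⟩
    linarith
  have hP2 : ∀ w ∈ P ∩ Metric.ball y t, Metric.infDist w E < ε * t := by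
    intro w hw
    exact lt_of_le_of_lt (le_ciSup hbdd2 ⟨w, hw⟩) hS2lt
  set d : ℝ := ⟪y - a, v⟫ with hddef
  have hd : |d| < ε * t := hE1 y ⟨hyE, mem_ball_self ht0⟩
  have hdabs : d ≤ |d| := le_abs_self d
  set y' : V n := y - d • v with hy'def
  have hvv : ⟪v, v⟫ = 1 := by
    rw [real_inner_self_eq_norm_mul_norm, hv]; ring
  have hy'P : ⟪y' - a, v⟫ = 0 := by
    rw [hy'def, show y - d • v - a = (y - a) - d • v by abel, inner_sub_left,
      real_inner_smul_left, hvv, ← hddef]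
    ring
  set s : ℝ := t / (8 * C) with hsdef
  have hs0 : 0 < s := by positivity
  have hsle : s ≤ t / 8 := by
    rw [hsdef, div_le_div_iff₀ (by positivity) (by positivity)]
    nlinarith
  have hdyy' : dist y' y < ε * t := by
    rw [hy'def, dist_eq_norm, show y - d • v - y = -(d • v) by abel, norm_neg, norm_smul, hv,
      mul_one]
    exact hd
  have hεts : ε * t < s / 2 := by
    have h1 : ε * t = c * t / (100 * C) := by rw [hεdef]; ring
    have h2 : s / 2 = t / (16 * C) := by rw [hsdef]; ring
    rw [h1, h2, div_lt_div_iff₀ (by positivity) (by positivity)]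
    nlinarith [mul_pos ht0 hC0]
  have hdyx : dist y x < R := mem_ball.mp hyEB.2
  -- main exclusion: balls of radius s/2 at signed distance s from P on either side
  have hmain : ∀ z : V n, |⟪z - a, v⟫| = s → dist z y' = s →
      Metric.ball z (s / 2) ⊆ Metric.ball x r ∧ ∀ w ∈ Metric.ball z (s / 2), w ∉ E := by
    intro z hzi hzd
    constructor
    · intro w hw
      have h1 : dist w z < s / 2 := mem_ball.mp hw
      have h2 : dist w x ≤ dist w y' + dist y' y + dist y x := dist_triangle4 _ _ _ _
      have h3 : dist w y' ≤ dist w z + dist z y' := dist_triangle _ _ _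
      rw [mem_ball]
      have hrR : r = 2 * R := by rw [hRdef]; ring
      rw [hrR]
      have hεt2 : ε * t < t / 16 := by linarith
      linarith [htR]
    · intro w hw hwE
      have h1 : dist w z < s / 2 := mem_ball.mp hw
      have hwy : dist w y < t := by
        have h2 : dist w y ≤ dist w z + dist z y' + dist y' y := dist_triangle4 _ _ _ _
        have hεt2 : ε * t < t / 16 := by linarith
        linarith
      have h2 := hE1 w ⟨hwE, mem_ball.mpr hwy⟩
      have hsplit : ⟪w - a, v⟫ = ⟪z - a, v⟫ + ⟪w - z, v⟫ := by
        rw [← inner_add_left]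
        congr 1
        abel
      have hsmall : |⟪w - z, v⟫| ≤ dist w z := by
        calc |⟪w - z, v⟫| ≤ ‖w - z‖ * ‖v‖ := abs_real_inner_le_norm _ _
          _ = dist w z := by rw [hv, mul_one, dist_eq_norm]
      have h4 : |⟪z - a, v⟫| ≤ |⟪w - a, v⟫| + |⟪w - z, v⟫| := by
        calc |⟪z - a, v⟫| = |⟪w - a, v⟫ + -⟪w - z, v⟫| := by rw [hsplit]; ring_nf
          _ ≤ |⟪w - a, v⟫| + |(-⟪w - z, v⟫)| := abs_add_le _ _
          _ = |⟪w - a, v⟫| + |⟪w - z, v⟫| := by rw [abs_neg]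
      rw [hzi] at h4
      linarith
  have hside : ∀ z : V n, (∀ w ∈ Metric.ball z (s / 2), w ∉ E) →
      Metric.ball z (s / 2) ⊆ Ω ∨ Metric.ball z (s / 2) ⊆ (closure Ω)ᶜ := by
    intro z hz
    apply IsPreconnected.subset_or_subset hΩ isClosed_closure.isOpen_compl
      (disjoint_compl_right.mono_left subset_closure) ?_
      (convex_ball z (s / 2)).isPreconnected
    intro w hw
    by_cases hcl : w ∈ closure Ω
    · left
      have hint : w ∈ interior Ω := by
        by_contra hint
        exact hz w hw ⟨hcl, hint⟩
      rwa [hΩ.interior_eq] at hint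
    · right
      exact hcl
  -- candidate points on both sides of P
  set zp : V n := y' + s • v with hzpdef
  set zm : V n := y' - s • v with hzmdef
  have hzpi : ⟪zp - a, v⟫ = s := by
    rw [hzpdef, show y' + s • v - a = (y' - a) + s • v by abel, inner_add_left,
      real_inner_smul_left, hvv, hy'P]
    ring
  have hzmi : ⟪zm - a, v⟫ = -s := by
    rw [hzmdef, show y' - s • v - a = (y' - a) - s • v by abel, inner_sub_left,
      real_inner_smul_left, hvv, hy'P]
    ring
  have hzpd : dist zp y' = s := by
    rw [hzpdef, dist_eq_norm, show y' + s • v - y' = s • v by abel, norm_smul, hv, mul_one]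
    exact abs_of_pos hs0
  have hzmd : dist zm y' = s := by
    rw [hzmdef, dist_eq_norm, show y' - s • v - y' = -(s • v) by abel, norm_neg, norm_smul, hv,
      mul_one]
    exact abs_of_pos hs0
  obtain ⟨hzp_sub, hzp_out⟩ := hmain zp (by rw [hzpi]; exact abs_of_pos hs0) hzpd
  obtain ⟨hzm_sub, hzm_out⟩ := hmain zm (by rw [hzmi, abs_neg]; exact abs_of_pos hs0) hzmd
  have hc₀r : σ / (32 * C) * r ≤ s / 2 := by
    have h1 : σ * r < 2 * t := by
      have h2 := htI.1
      rw [hRdef] at h2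
      nlinarith
    have h2 : s / 2 = t / (16 * C) := by rw [hsdef]; ring
    rw [h2, div_mul_eq_mul_div, div_le_div_iff₀ (by positivity) (by positivity)]
    nlinarith
  rcases hside zp hzp_out with hzpΩ | hzpX
  · rcases hside zm hzm_out with hzmΩ | hzmX
    · -- both corkscrew balls inside Ω: contradiction with uniformity
      exfalso
      obtain ⟨γ, hγc, hγ0, hγ1, hγΩ, hγvar, hγdist⟩ :=
        hUnif zp (hzpΩ (mem_ball_self (by positivity)))
          zm (hzmΩ (mem_ball_self (by positivity)))
      have hXY : dist zp zm = 2 * s := by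
        rw [dist_eq_norm, hzpdef, hzmdef,
          show y' + s • v - (y' - s • v) = (2 * s) • v by module, norm_smul, hv, mul_one]
        exact abs_of_pos (by positivity)
      have hfc : ContinuousOn (fun u => ⟪γ u - a, v⟫) (Set.Icc (0:ℝ) 1) :=
        (hγc.sub continuousOn_const).inner continuousOn_const
      have hIVT := intermediate_value_Icc' zero_le_one hfc
      have h0mem : (0:ℝ) ∈ Set.Icc (⟪γ 1 - a, v⟫) (⟪γ 0 - a, v⟫) := by
        rw [hγ0, hγ1, hzpi, hzmi]
        exact ⟨by linarith only [hs0], hs0.le⟩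
      obtain ⟨u, huI, hu⟩ := hIVT h0mem
      have hu' : ⟪γ u - a, v⟫ = 0 := hu
      have hZX : dist (γ u) zp ≤ t / 4 := by
        have h1 : edist (γ u) zp ≤ eVariationOn γ (Set.Icc 0 1) := by
          rw [← hγ0]
          exact eVariationOn.edist_le γ huI (Set.left_mem_Icc.mpr zero_le_one)
        have h2 : edist (γ u) zp ≤ ENNReal.ofReal (C * dist zp zm) := le_trans h1 hγvar
        have h3 : C * dist zp zm = t / 4 := by
          rw [hXY, hsdef]
          field_simp
          ring
        rw [h3] at h2
        exact (edist_le_ofReal (by positivity)).mp h2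
      have hZy : dist (γ u) y < t := by
        have h2 : dist (γ u) y ≤ dist (γ u) zp + dist zp y' + dist y' y := dist_triangle4 _ _ _ _
        have hεt2 : ε * t < t / 16 := by linarith only [hεts, hsle]
        linarith only [h2, hZX, hzpd, hdyy', hεt2, hsle, ht0]
      have hZP : γ u ∈ P := by rw [hPdef]; exact hu'
      have hZE := hP2 (γ u) ⟨hZP, mem_ball.mpr hZy⟩
      have hZXlow : s ≤ dist (γ u) zp := by
        have h1 : ⟪zp - γ u, v⟫ = s := by
          rw [show zp - γ u = (zp - a) - (γ u - a) by abel, inner_sub_left, hzpi, hu', sub_zero]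
        calc s = |⟪zp - γ u, v⟫| := by rw [h1]; exact (abs_of_pos hs0).symm
          _ ≤ ‖zp - γ u‖ * ‖v‖ := abs_real_inner_le_norm _ _
          _ = dist (γ u) zp := by rw [hv, mul_one, ← dist_eq_norm, dist_comm]
      have hZYlow : s ≤ dist (γ u) zm := by
        have h1 : ⟪zm - γ u, v⟫ = -s := by
          rw [show zm - γ u = (zm - a) - (γ u - a) by abel, inner_sub_left, hzmi, hu', sub_zero]
        calc s = |⟪zm - γ u, v⟫| := by rw [h1, abs_neg]; exact (abs_of_pos hs0).symm
          _ ≤ ‖zm - γ u‖ * ‖v‖ := abs_real_inner_le_norm _ _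
          _ = dist (γ u) zm := by rw [hv, mul_one, ← dist_eq_norm, dist_comm]
      have huni := hγdist u huI
      have hmin : s ≤ min (dist (γ u) zp) (dist (γ u) zm) := le_min hZXlow hZYlow
      have hinf : c * s ≤ Metric.infDist (γ u) (frontier Ω) := by
        calc c * s ≤ c * min (dist (γ u) zp) (dist (γ u) zm) :=
            mul_le_mul_of_nonneg_left hmin hc₀.le
          _ ≤ Metric.infDist (γ u) (frontier Ω) := huni
      have hεs : ε * t < c * s := by
        have h1 : ε * t = c * t / (100 * C) := by rw [hεdef]; ring
        have h2 : c * s = c * t / (8 * C) := by rw [hsdef]; ring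
        rw [h1, h2, div_lt_div_iff₀ (by positivity) (by positivity)]
        linarith only [mul_pos (mul_pos hc₀ ht0) hC0]
      have hEfr : Metric.infDist (γ u) E < ε * t := hZE
      rw [hEdef] at hEfr
      linarith only [hEfr, hinf, hεs]
    · refine ⟨zm, fun w hw => ?_⟩
      have hw' : w ∈ Metric.ball zm (s / 2) := ball_subset_ball hc₀r hw
      exact ⟨hzm_sub hw', hzmX hw'⟩
  · refine ⟨zp, fun w hw => ?_⟩
    have hw' : w ∈ Metric.ball zp (s / 2) := ball_subset_ball hc₀r hw
    exact ⟨hzp_sub hw', hzpX hw'⟩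
end
end

section
/- Let n ≥ 1 and let Ω ⊆ ℝ^{n+1} be a (c,C)-uniform domain. Set k = 1/(2C+1) and let ε < c k / 4. Suppose x ∈ ∂Ω, 0 < r < diam ∂Ω, P is an affine hyperplane with unit normal vector v, and bβ_{∂Ω}(x,r,P) < ε. Define X^± = x ± (k r / 2) v. Then X^+ and X^− both lie off ∂Ω, and at least one of X^+, X^− lies in ℝ^{n+1} \ closure(Ω); in particular it is not the case that both X^+ ∈ Ω and X^− ∈ Ω. -/
open Metric Set
open scoped RealInnerProductSpace ENNReal

noncomputable section

/-- Lower bound: the distance of a point to the hyperplane `{p | ⟪p - a, v⟫ = 0}`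
is at least `|⟪y - a, v⟫|` when `v` is a unit vector. -/
lemma abs_inner_le_infDist_hyperplane {n : ℕ} (v a y : V n) (hv : ‖v‖ = 1) :
    |⟪y - a, v⟫| ≤ Metric.infDist y {p : V n | ⟪p - a, v⟫ = 0} := by
  rw [Metric.infDist_eq_iInf]
  have hne : Nonempty ↥{p : V n | ⟪p - a, v⟫ = 0} := ⟨⟨a, by simp⟩⟩
  refine le_ciInf fun ⟨p, hp⟩ => ?_
  have hp' : ⟪p - a, v⟫ = 0 := hp
  have hyp : ⟪y - p, v⟫ = ⟪y - a, v⟫ := by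
    have h : y - p = (y - a) - (p - a) := by abel
    rw [h, inner_sub_left, hp', sub_zero]
  calc |⟪y - a, v⟫| = |⟪y - p, v⟫| := by rw [hyp]
    _ ≤ ‖y - p‖ * ‖v‖ := abs_real_inner_le_norm _ _
    _ = dist y p := by rw [hv, mul_one, dist_eq_norm]

set_option maxHeartbeats 2000000 in
/-- Let `Ω ⊆ ℝ^{n+1}` be a `(c,C)`-uniform domain, `k = 1/(2C+1)`,
`ε < ck/4`.  If `x ∈ ∂Ω`, `0 < r < diam ∂Ω`, and `P` is an affine hyperplane with unit
normal `v` such that `bβ_{∂Ω}(x,r,P) < ε`, then the points `X^± = x ± (kr/2)v` lie off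
`∂Ω`, at least one of them lies outside `closure Ω`, and in particular they are not
both in `Ω`. -/
theorem statement2 (n : ℕ) (hn : 1 ≤ n) (c C : ℝ) (hc₀ : 0 < c) (hc₁ : c < 1) (hC : 1 < C)
    (Ω : Set (V n)) (hΩopen : IsOpen Ω) (hΩunif : IsUniform c C Ω)
    (ε : ℝ) (hε : 0 < ε) (hεk : ε < c * (1 / (2 * C + 1)) / 4)
    (x : V n) (hx : x ∈ frontier Ω) (r : ℝ) (hr : 0 < r)
    (hrdiam : ENNReal.ofReal r < EMetric.diam (frontier Ω))
    (v a : V n) (hv : ‖v‖ = 1)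
    (hβ : bbeta (frontier Ω) {p : V n | ⟪p - a, v⟫ = 0} x r < ε) :
    (x + ((1 / (2 * C + 1)) * r / 2) • v ∉ frontier Ω) ∧
    (x - ((1 / (2 * C + 1)) * r / 2) • v ∉ frontier Ω) ∧
    ((x + ((1 / (2 * C + 1)) * r / 2) • v ∉ closure Ω) ∨
     (x - ((1 / (2 * C + 1)) * r / 2) • v ∉ closure Ω)) ∧
    ¬ ((x + ((1 / (2 * C + 1)) * r / 2) • v ∈ Ω) ∧
       (x - ((1 / (2 * C + 1)) * r / 2) • v ∈ Ω)) := by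
  simp only [bbeta] at hβ
  set k : ℝ := 1 / (2 * C + 1) with hkdef
  have h2C : (0:ℝ) < 2 * C + 1 := by linarith
  have hk0 : 0 < k := by rw [hkdef]; positivity
  have hkC : k * (2 * C + 1) = 1 := by rw [hkdef]; field_simp
  have hk1 : k < 1 := by rw [hkdef, div_lt_one h2C]; linarith
  set s : ℝ := k * r / 2 with hsdef
  have hs0 : 0 < s := by rw [hsdef]; positivity
  set E := frontier Ω with hE
  set P : Set (V n) := {p : V n | ⟪p - a, v⟫ = 0} with hP
  set d : ℝ := ⟪x - a, v⟫ with hd_def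
  set Xp := x + s • v with hXp
  set Xm := x - s • v with hXm
  have hlow : ∀ y : V n, |⟪y - a, v⟫| ≤ infDist y P :=
    fun y => abs_inner_le_infDist_hyperplane v a y hv
  have hxball : x ∈ E ∩ ball x r := ⟨hx, mem_ball_self hr⟩
  set S1 := ⨆ y : ↥(E ∩ ball x r), infDist (y : V n) P with hS1def
  set S2 := ⨆ y : ↥(P ∩ ball x r), infDist (y : V n) E with hS2def
  have bdd1 : BddAbove (Set.range fun y : ↥(E ∩ ball x r) => infDist (y : V n) P) := by
    refine ⟨infDist x P + r, ?_⟩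
    rintro z ⟨⟨y, hy⟩, rfl⟩
    calc infDist y P ≤ infDist x P + dist y x := infDist_le_infDist_add_dist
      _ ≤ infDist x P + r := by
          have := mem_ball.mp hy.2; linarith
  have bdd2 : BddAbove (Set.range fun y : ↥(P ∩ ball x r) => infDist (y : V n) E) := by
    refine ⟨r, ?_⟩
    rintro z ⟨⟨y, hy⟩, rfl⟩
    calc infDist y E ≤ dist y x := infDist_le_dist_of_mem hx
      _ ≤ r := (mem_ball.mp hy.2).le
  have h1 : ∀ y ∈ E ∩ ball x r, infDist y P ≤ S1 := fun y hy => le_ciSup bdd1 ⟨y, hy⟩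
  have h2 : ∀ z ∈ P ∩ ball x r, infDist z E ≤ S2 := fun z hz => le_ciSup bdd2 ⟨z, hz⟩
  have S1nn : 0 ≤ S1 := Real.iSup_nonneg fun _ => infDist_nonneg
  have S2nn : 0 ≤ S2 := Real.iSup_nonneg fun _ => infDist_nonneg
  have hsum : S1 + S2 < ε * r := by
    have h : r * (r⁻¹ * (S1 + S2)) < r * ε := (mul_lt_mul_iff_right₀ hr).2 hβ
    rwa [← mul_assoc, mul_inv_cancel₀ hr.ne', one_mul, mul_comm r ε] at h
  have hS1lt : S1 < ε * r := by linarith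
  have hS2lt : S2 < ε * r := by linarith
  have hd : |d| < ε * r := lt_of_le_of_lt (le_trans (hlow x) (h1 x hxball)) hS1lt
  have hdlt := abs_lt.mp hd
  -- numeric facts
  have hεk4 : ε < k / 4 := by nlinarith
  have hεs : ε * r < s / 2 := by
    rw [hsdef]; nlinarith [mul_lt_mul_of_pos_right hεk4 hr]
  have hsr : s < r := by
    rw [hsdef]; nlinarith [mul_lt_mul_of_pos_right hk1 hr]
  -- inner products of X± with v
  have hip : ∀ t : ℝ, ⟪(x + t • v) - a, v⟫ = d + t := by
    intro t
    have h : (x + t • v) - a = (x - a) + t • v := by abel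
    rw [h, inner_add_left, real_inner_smul_left, real_inner_self_eq_norm_sq, hv, hd_def]
    ring
  have hippa : ⟪Xp - a, v⟫ = d + s := hip s
  have hipma : ⟪Xm - a, v⟫ = d - s := by
    have h : Xm = x + (-s) • v := by rw [hXm, neg_smul, ← sub_eq_add_neg]
    rw [h, hip (-s)]; ring
  have hdXpx : dist Xp x = s := by
    rw [hXp, dist_eq_norm, add_sub_cancel_left, norm_smul, hv, mul_one,
      Real.norm_eq_abs, abs_of_pos hs0]
  have hdXmx : dist Xm x = s := by
    rw [hXm, dist_eq_norm, sub_sub_cancel_left, norm_neg, norm_smul, hv, mul_one,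
      Real.norm_eq_abs, abs_of_pos hs0]
  -- X± not in the frontier
  have hXpE : Xp ∉ E := by
    intro hmem
    have hball : Xp ∈ ball x r := by rw [mem_ball, hdXpx]; exact hsr
    have h := lt_of_le_of_lt (le_trans (hlow Xp) (h1 Xp ⟨hmem, hball⟩)) hS1lt
    rw [hippa] at h
    have := abs_lt.mp h
    linarith
  have hXmE : Xm ∉ E := by
    intro hmem
    have hball : Xm ∈ ball x r := by rw [mem_ball, hdXmx]; exact hsr
    have h := lt_of_le_of_lt (le_trans (hlow Xm) (h1 Xm ⟨hmem, hball⟩)) hS1lt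
    rw [hipma] at h
    have := abs_lt.mp h
    linarith
  -- main part
  have hthird : (Xp ∉ closure Ω) ∨ (Xm ∉ closure Ω) := by
    by_contra hcon
    push_neg at hcon
    obtain ⟨hpcl, hmcl⟩ := hcon
    have hpΩ : Xp ∈ Ω := by
      rcases (closure_eq_interior_union_frontier Ω ▸ hpcl) with h | h
      · rwa [hΩopen.interior_eq] at h
      · exact absurd h hXpE
    have hmΩ : Xm ∈ Ω := by
      rcases (closure_eq_interior_union_frontier Ω ▸ hmcl) with h | h
      · rwa [hΩopen.interior_eq] at h
      · exact absurd h hXmE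
    obtain ⟨γ, hγcont, hγ0, hγ1, hγin, hγvar, hγdist⟩ := hΩunif Xp hpΩ Xm hmΩ
    have hdistXpXm : dist Xp Xm = 2 * s := by
      have h : Xp - Xm = (2 * s) • v := by
        rw [hXp, hXm]; module
      rw [dist_eq_norm, h, norm_smul, hv, mul_one, Real.norm_eq_abs,
        abs_of_pos (by linarith : (0:ℝ) < 2 * s)]
    have hfcont : ContinuousOn (fun t => ⟪γ t - a, v⟫) (Icc (0:ℝ) 1) :=
      ContinuousOn.inner (hγcont.sub continuousOn_const) continuousOn_const
    have hmem0 : (0:ℝ) ∈ Icc ((fun t => ⟪γ t - a, v⟫) 1) ((fun t => ⟪γ t - a, v⟫) 0) := by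
      simp only [hγ0, hγ1, hippa, hipma, Set.mem_Icc]
      constructor <;> linarith
    obtain ⟨t, ht, hft'⟩ := intermediate_value_Icc' (by norm_num : (0:ℝ) ≤ 1) hfcont hmem0
    have hft : ⟪γ t - a, v⟫ = (0:ℝ) := hft'
    set Z := γ t with hZ
    have hZP : Z ∈ P := by rw [hP]; exact hft
    have hZXp : dist Z Xp ≤ C * (2 * s) := by
      have h0mem : (0:ℝ) ∈ Icc (0:ℝ) 1 := ⟨le_refl 0, by norm_num⟩
      have h := eVariationOn.edist_le γ ht h0mem
      rw [hγ0] at h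
      have h' := le_trans h hγvar
      rw [hdistXpXm] at h'
      exact (edist_le_ofReal (by positivity)).mp h'
    have hZball : Z ∈ ball x r := by
      rw [mem_ball]
      have htri : dist Z x ≤ dist Z Xp + dist Xp x := dist_triangle _ _ _
      rw [hdXpx] at htri
      have hcalc : C * (2 * s) + s = r / 2 := by
        rw [hsdef]; linear_combination (r / 2) * hkC
      linarith
    have hup : infDist Z E < ε * r := lt_of_le_of_lt (h2 Z ⟨hZP, hZball⟩) hS2lt
    -- lower bounds on dist Z X±
    have hinnerZp : ⟪Z - Xp, v⟫ = -(d + s) := by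
      have h : Z - Xp = (Z - a) - (Xp - a) := by abel
      rw [h, inner_sub_left, hippa]
      have : ⟪Z - a, v⟫ = (0:ℝ) := hft
      rw [this]; ring
    have hinnerZm : ⟪Z - Xm, v⟫ = -(d - s) := by
      have h : Z - Xm = (Z - a) - (Xm - a) := by abel
      rw [h, inner_sub_left, hipma]
      have : ⟪Z - a, v⟫ = (0:ℝ) := hft
      rw [this]; ring
    have hZpd : s / 2 < dist Z Xp := by
      have h := abs_real_inner_le_norm (Z - Xp) v
      rw [hinnerZp, hv, mul_one, ← dist_eq_norm] at h
      have habs : s / 2 < |-(d + s)| := by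
        rw [abs_neg]
        calc s / 2 < d + s := by linarith
          _ ≤ |d + s| := le_abs_self _
      linarith
    have hZmd : s / 2 < dist Z Xm := by
      have h := abs_real_inner_le_norm (Z - Xm) v
      rw [hinnerZm, hv, mul_one, ← dist_eq_norm] at h
      have habs : s / 2 < |-(d - s)| := by
        rw [abs_neg, abs_sub_comm]
        calc s / 2 < s - d := by linarith
          _ ≤ |s - d| := le_abs_self _
      linarith
    have hlb := hγdist t ht
    have hmin : s / 2 < min (dist Z Xp) (dist Z Xm) := lt_min hZpd hZmd
    have hclb : c * (s / 2) < infDist Z E := by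
      calc c * (s / 2) < c * min (dist Z Xp) (dist Z Xm) :=
            (mul_lt_mul_iff_right₀ hc₀).2 hmin
        _ ≤ infDist Z E := hlb
    -- final contradiction : ε r < c * s / 2
    have hεcs : ε * r < c * (s / 2) := by
      rw [hsdef]; nlinarith [mul_lt_mul_of_pos_right hεk hr, mul_pos hk0 hr]
    linarith
  refine ⟨hXpE, hXmE, hthird, ?_⟩
  rintro ⟨hp, hm⟩
  rcases hthird with h | h
  · exact h (subset_closure hp)
  · exact h (subset_closure hm)
end
end

section
/- Let n ≥ 1 and let Ω ⊆ ℝ^{n+1} be an open set satisfying the interior corkscrew condition with constant c ∈ (0,1). Let x ∈ ∂Ω, 0 < r < diam ∂Ω, let v be a unit vector, let 0 < ε < c/4, and define B^±(x,r) = B(x,r) ∩ { x + y : ±(y·v) > ε r }. Assume that B^+(x,r) ∩ ∂Ω = ∅ and B^−(x,r) ∩ ∂Ω = ∅, and that B^−(x,r) ⊆ ℝ^{n+1} \ closure(Ω). Then B^+(x,r) ⊆ Ω. -/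
open Metric Set
open scoped RealInnerProductSpace ENNReal

noncomputable section

/-- `Ω` satisfies the interior corkscrew condition with constant `c`. -/
def IntCorkscrew {n : ℕ} (c : ℝ) (Ω : Set (V n)) : Prop :=
  ∀ x ∈ frontier Ω, ∀ r : ℝ, 0 < r → ENNReal.ofReal r < EMetric.diam (frontier Ω) →
    ∃ X : V n, Metric.ball X (c * r) ⊆ Metric.ball x r ∩ Ω

/-- Let `Ω ⊆ ℝ^{n+1}` be open satisfying the interior corkscrew condition
with constant `c ∈ (0,1)`.  Let `x ∈ ∂Ω`, `0 < r < diam ∂Ω`, `v` a unit vector,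
`0 < ε < c/4`, and `B^± = B(x,r) ∩ {x + y : ±(y·v) > εr}`.  If both `B^±` avoid `∂Ω`
and `B^- ⊆ ℝ^{n+1} \ closure Ω`, then `B^+ ⊆ Ω`. -/
theorem statement3 (n : ℕ) (hn : 1 ≤ n) (c : ℝ) (hc₀ : 0 < c) (hc₁ : c < 1)
    (Ω : Set (V n)) (hΩopen : IsOpen Ω) (hcork : IntCorkscrew c Ω)
    (x : V n) (hx : x ∈ frontier Ω) (r : ℝ) (hr : 0 < r)
    (hrdiam : ENNReal.ofReal r < EMetric.diam (frontier Ω))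
    (v : V n) (hv : ‖v‖ = 1) (ε : ℝ) (hε : 0 < ε) (hεc : ε < c / 4)
    (hBp : {p : V n | p ∈ Metric.ball x r ∧ ε * r < ⟪p - x, v⟫} ∩ frontier Ω = ∅)
    (hBm : {p : V n | p ∈ Metric.ball x r ∧ ⟪p - x, v⟫ < -(ε * r)} ∩ frontier Ω = ∅)
    (hBmExt : {p : V n | p ∈ Metric.ball x r ∧ ⟪p - x, v⟫ < -(ε * r)} ⊆ (closure Ω)ᶜ) :
    {p : V n | p ∈ Metric.ball x r ∧ ε * r < ⟪p - x, v⟫} ⊆ Ω := by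
  set Bp : Set (V n) := {p : V n | p ∈ Metric.ball x r ∧ ε * r < ⟪p - x, v⟫} with hBpdef
  -- `Bp` is convex, hence preconnected.
  have hconv : Convex ℝ Bp := by
    have h1 : Convex ℝ {p : V n | ε * r + ⟪x, v⟫ < ⟪p, v⟫} := by
      apply convex_halfSpace_gt
      exact ⟨fun p q => inner_add_left _ _ _, fun a p => real_inner_smul_left _ _ _⟩
    have heq : Bp = Metric.ball x r ∩ {p : V n | ε * r + ⟪x, v⟫ < ⟪p, v⟫} := by
      ext p
      simp only [hBpdef, mem_setOf_eq, mem_inter_iff, inner_sub_left]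
      constructor
      · rintro ⟨h1, h2⟩; exact ⟨h1, by linarith⟩
      · rintro ⟨h1, h2⟩; exact ⟨h1, by linarith⟩
    rw [heq]
    exact (convex_ball x r).inter h1
  have hpre : IsPreconnected Bp := hconv.isPreconnected
  -- `Bp` avoids the frontier, so it lies in `Ω ∪ (closure Ω)ᶜ`.
  have hsub : Bp ⊆ Ω ∪ (closure Ω)ᶜ := by
    intro p hp
    have hpf : p ∉ frontier Ω := fun h => by
      have : p ∈ Bp ∩ frontier Ω := ⟨hp, h⟩
      rw [hBp] at this; exact this
    by_cases hpc : p ∈ closure Ω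
    · left
      by_contra hpo
      exact hpf ⟨hpc, by rwa [hΩopen.interior_eq]⟩
    · right; exact hpc
  -- Corkscrew point.
  obtain ⟨X, hX⟩ := hcork x hx r hr hrdiam
  have hcr : 0 < c * r := mul_pos hc₀ hr
  have hXmem : X ∈ Metric.ball x r ∩ Ω := hX (Metric.mem_ball_self hcr)
  -- X is not in B⁻ since X ∈ Ω ⊆ closure Ω.
  have hXnotBm : ¬ (⟪X - x, v⟫ < -(ε * r)) := by
    intro h
    exact hBmExt ⟨hXmem.1, h⟩ (subset_closure hXmem.2)
  push_neg at hXnotBm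
  -- The shifted point X' = X + (c*r/2) • v lies in Bp ∩ Ω.
  set X' : V n := X + (c * r / 2) • v with hX'def
  have hX'ball : X' ∈ Metric.ball X (c * r) := by
    rw [Metric.mem_ball, dist_eq_norm]
    have : X' - X = (c * r / 2) • v := by rw [hX'def]; abel
    rw [this, norm_smul, hv, mul_one, Real.norm_eq_abs, abs_of_pos (by linarith)]
    linarith
  have hX'mem : X' ∈ Metric.ball x r ∩ Ω := hX hX'ball
  have hX'inner : ε * r < ⟪X' - x, v⟫ := by
    have : X' - x = (X - x) + (c * r / 2) • v := by rw [hX'def]; abel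
    rw [this, inner_add_left, real_inner_smul_left, real_inner_self_eq_norm_sq, hv]
    nlinarith
  have hX'Bp : X' ∈ Bp := ⟨hX'mem.1, hX'inner⟩
  -- Conclude by preconnectedness.
  have hdisj : Disjoint Ω (closure Ω)ᶜ :=
    Set.disjoint_compl_right_iff_subset.mpr subset_closure
  rcases hpre.subset_or_subset hΩopen isClosed_closure.isOpen_compl hdisj hsub with h | h
  · exact h
  · exact absurd (h hX'Bp) (by simp [subset_closure hX'mem.2])
end
end

section
/- Let n ≥ 1, let E ⊆ ℝ^{n+1} be a closed n-dimensional Ahlfors–David regular set with constant C_A, let ε > 0, and suppose E satisfies the bilateral weak geometric lemma at level ε with constant C₁. Then there exists θ ∈ (0, 1/2], depending only on n, C_A, C₁ and ε, such that for every x ∈ E and every 0 < r < diam E there exist a point x₁ ∈ E ∩ B(x, r/2) and a radius r₁ with θ r ≤ r₁ ≤ r/2, B(x₁, r₁) ⊆ B(x, r), and bβ_E(x₁, r₁) < ε. -/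
open Metric Set MeasureTheory
open scoped RealInnerProductSpace ENNReal

noncomputable section

/-- If `E ⊆ ℝ^{n+1}` is a closed `n`-ADR set satisfying the BWGL at level
`ε` with constant `C₁`, then there is `θ ∈ (0, 1/2]`, depending only on `n`, `C_A`, `C₁`
and `ε`, such that for every `x ∈ E` and `0 < r < diam E` there are `x₁ ∈ E ∩ B(x, r/2)`
and `θr ≤ r₁ ≤ r/2` with `B(x₁,r₁) ⊆ B(x,r)` and `bβ_E(x₁,r₁) < ε`. -/
theorem statement4 (n : ℕ) (hn : 1 ≤ n) (CA ε C₁ : ℝ) (hCA : 1 ≤ CA) (hε : 0 < ε)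
    (hC₁ : 0 < C₁) :
    ∃ θ : ℝ, 0 < θ ∧ θ ≤ 1 / 2 ∧
      ∀ E : Set (V n), IsClosed E → IsADR n E CA → BWGL n E ε C₁ →
      ∀ x ∈ E, ∀ r : ℝ, 0 < r → ENNReal.ofReal r < EMetric.diam E →
        ∃ x₁ ∈ E ∩ Metric.ball x (r / 2), ∃ r₁ : ℝ,
          θ * r ≤ r₁ ∧ r₁ ≤ r / 2 ∧
          Metric.ball x₁ r₁ ⊆ Metric.ball x r ∧
          bbetaInf E x₁ r₁ < ε := by
  set L : ℝ := C₁ * CA * 4 ^ n + 1 with hL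
  have hL0 : 0 < L := by positivity
  refine ⟨Real.exp (-L) / 4, by positivity, ?_, ?_⟩
  · have : Real.exp (-L) ≤ 1 := Real.exp_le_one_iff.2 (by linarith)
    linarith
  intro E hEc hADR hBW x hx r hr hrd
  by_contra hcon
  push_neg at hcon
  set θ : ℝ := Real.exp (-L) / 4 with hθ
  have hθ0 : 0 < θ := by positivity
  have hθ4 : θ < 1 / 4 := by
    have h1 : Real.exp (-L) < 1 := Real.exp_lt_one_iff.2 (by linarith)
    rw [hθ]; linarith
  have hcon' : ∀ x₁ ∈ E ∩ Metric.ball x (r / 2), ∀ r₁ : ℝ, θ * r ≤ r₁ → r₁ ≤ r / 2 →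
      Metric.ball x₁ r₁ ⊆ Metric.ball x r → ε ≤ bbetaInf E x₁ r₁ := hcon
  -- θr < r/4
  have hθr : θ * r < r / 4 := by nlinarith
  have hθr0 : 0 < θ * r := by positivity
  -- key: for y ∈ E ∩ B(x, r/4), Ioc (θr) (r/4) ⊆ bad set
  have key : ∀ y ∈ E ∩ Metric.ball x (r / 4),
      Set.Ioc (θ * r) (r / 4) ⊆ {t : ℝ | t ∈ Set.Ioo 0 r ∧ ε ≤ bbetaInf E y t} := by
    intro y hy t ht
    obtain ⟨ht1, ht2⟩ := ht
    have hy2 : y ∈ E ∩ Metric.ball x (r / 2) := by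
      refine ⟨hy.1, ?_⟩
      have := hy.2
      rw [Metric.mem_ball] at this ⊢
      linarith
    refine ⟨⟨lt_trans hθr0 ht1, by linarith⟩, ?_⟩
    refine hcon' y hy2 t (le_of_lt ht1) (by linarith) ?_
    intro z hz
    rw [Metric.mem_ball] at hz ⊢
    have hyx : dist y x < r / 4 := hy.2
    calc dist z x ≤ dist z y + dist y x := dist_triangle z y x
      _ < t + r / 4 := by linarith
      _ ≤ r := by linarith
  -- inner integral lower bound
  have inner : ∀ y ∈ E ∩ Metric.ball x (r / 4),
      ENNReal.ofReal L ≤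
        ∫⁻ t in {t : ℝ | t ∈ Set.Ioo 0 r ∧ ε ≤ bbetaInf E y t}, ENNReal.ofReal t⁻¹ := by
    intro y hy
    have hsub := key y hy
    have hmono : (∫⁻ t in Set.Ioc (θ * r) (r / 4), ENNReal.ofReal t⁻¹) ≤
        ∫⁻ t in {t : ℝ | t ∈ Set.Ioo 0 r ∧ ε ≤ bbetaInf E y t}, ENNReal.ofReal t⁻¹ :=
      lintegral_mono' (Measure.restrict_mono hsub le_rfl) le_rfl
    refine le_trans ?_ hmono
    have hint : MeasureTheory.IntegrableOn (fun t : ℝ => t⁻¹)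
        (Set.Ioc (θ * r) (r / 4)) := by
      refine ((continuousOn_id.inv₀ ?_).integrableOn_Icc).mono_set Set.Ioc_subset_Icc_self
      intro t ht
      exact ne_of_gt (lt_of_lt_of_le hθr0 ht.1)
    have hnn : 0 ≤ᵐ[volume.restrict (Set.Ioc (θ * r) (r / 4))] fun t : ℝ => t⁻¹ := by
      refine ae_restrict_of_forall_mem measurableSet_Ioc ?_
      intro t ht
      exact inv_nonneg.2 (le_of_lt (lt_trans hθr0 ht.1))
    rw [← MeasureTheory.ofReal_integral_eq_lintegral_ofReal hint hnn]
    have hval : (∫ t in Set.Ioc (θ * r) (r / 4), t⁻¹) = L := by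
      rw [← intervalIntegral.integral_of_le (le_of_lt hθr),
        integral_inv_of_pos hθr0 (by linarith : (0:ℝ) < r / 4)]
      have : (r / 4) / (θ * r) = Real.exp L := by
        rw [hθ]
        rw [div_eq_iff (by positivity)]
        field_simp [Real.exp_neg]
        rw [← Real.exp_add, add_neg_cancel, Real.exp_zero]
      rw [this, Real.log_exp]
    rw [hval]
  -- measure lower bound for E ∩ B(x, r/4)
  have hdr4 : ENNReal.ofReal (r / 4) < EMetric.diam E :=
    lt_of_le_of_lt (ENNReal.ofReal_le_ofReal (by linarith)) hrd
  have hmeas := (hADR x hx (r / 4) (by linarith) hdr4).1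
  -- combine
  have hBWx := hBW x hx r hr
  have hms : MeasurableSet (E ∩ Metric.ball x (r / 4)) :=
    hEc.measurableSet.inter Metric.isOpen_ball.measurableSet
  have step1 : ENNReal.ofReal L * μH[(n : ℝ)] (E ∩ Metric.ball x (r / 4)) ≤
      ∫⁻ y in E ∩ Metric.ball x (r / 4),
        (∫⁻ t in {t : ℝ | t ∈ Set.Ioo 0 r ∧ ε ≤ bbetaInf E y t}, ENNReal.ofReal t⁻¹)
        ∂(μH[(n : ℝ)]) := by
    rw [← MeasureTheory.setLIntegral_const]
    refine lintegral_mono_ae ?_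
    exact ae_restrict_of_forall_mem hms inner
  have step2 : (∫⁻ y in E ∩ Metric.ball x (r / 4),
        (∫⁻ t in {t : ℝ | t ∈ Set.Ioo 0 r ∧ ε ≤ bbetaInf E y t}, ENNReal.ofReal t⁻¹)
        ∂(μH[(n : ℝ)])) ≤
      ∫⁻ y in E ∩ Metric.ball x r,
        (∫⁻ t in {t : ℝ | t ∈ Set.Ioo 0 r ∧ ε ≤ bbetaInf E y t}, ENNReal.ofReal t⁻¹)
        ∂(μH[(n : ℝ)]) := by
    refine lintegral_mono' (Measure.restrict_mono ?_ le_rfl) le_rfl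
    exact Set.inter_subset_inter_right E (Metric.ball_subset_ball (by linarith))
  have chain : ENNReal.ofReal (L * (CA⁻¹ * (r / 4) ^ n)) ≤ ENNReal.ofReal (C₁ * r ^ n) := by
    calc ENNReal.ofReal (L * (CA⁻¹ * (r / 4) ^ n))
        = ENNReal.ofReal L * ENNReal.ofReal (CA⁻¹ * (r / 4) ^ n) :=
          ENNReal.ofReal_mul (le_of_lt hL0)
      _ ≤ ENNReal.ofReal L * μH[(n : ℝ)] (E ∩ Metric.ball x (r / 4)) := by
          exact mul_le_mul_right hmeas _
      _ ≤ _ := le_trans step1 (le_trans step2 hBWx)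
  have hCA0 : (0:ℝ) < CA := lt_of_lt_of_le one_pos hCA
  have hrn : (0:ℝ) < r ^ n := pow_pos hr n
  have h4n : (0:ℝ) < 4 ^ n := by positivity
  have hfinal : C₁ * r ^ n < L * (CA⁻¹ * (r / 4) ^ n) := by
    have hpow : (r / 4) ^ n = r ^ n / 4 ^ n := div_pow r 4 n
    rw [hpow, hL]
    have heq : (C₁ * CA * 4 ^ n + 1) * (CA⁻¹ * (r ^ n / 4 ^ n)) =
        C₁ * r ^ n + r ^ n / (CA * 4 ^ n) := by
      field_simp
    rw [heq]
    have : 0 < r ^ n / (CA * 4 ^ n) := by positivity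
    linarith
  have := lt_of_lt_of_le ((ENNReal.ofReal_lt_ofReal_iff (by positivity)).2 hfinal) chain
  exact lt_irrefl _ this
end
end

section
/- Let Ω ⊆ ℝ^{n+1} be open with nonempty boundary, write δ(X) = dist(X,∂Ω). Let X, X' ∈ Ω, let ρ = min{δ(X), δ(X')}, and suppose ρ/2 ≤ |X−X'| ≤ Λρ for some Λ ≥ 1. Let B₁, …, B_N be open balls contained in Ω with X ∈ B₁, X' ∈ B_N, B_k ∩ B_{k+1} ≠ ∅ for 1 ≤ k < N, and C₀⁻¹ diam B_k ≤ dist(B_k,∂Ω) ≤ C₀ diam B_k for every k, where C₀ > 1. Let γ be the polygonal curve which connects X to the center of B₁, then the centers of B₁, …, B_N in order, and finally the center of B_N to X'. Then γ ⊆ Ω, length(γ) ≤ M|X−X'|, and δ(Z) ≥ c_* · min(|Z−X|, |Z−X'|) for every Z on γ, where M > 0 and c_* ∈ (0,1) depend only on n, Λ, N and C₀. -/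
open Metric Set
open scoped ENNReal

noncomputable section

/-- The distance between two subsets of `ℝ^{n+1}`. -/
def setDist {n : ℕ} (A B : Set (V n)) : ℝ :=
  sInf {d : ℝ | ∃ a ∈ A, ∃ b ∈ B, d = dist a b}

/-- The vertices of the polygonal curve joining `X` to the centers `ctr 0, …, ctr N`
(in order) and then to `X'`. -/
def polyPts {n : ℕ} (N : ℕ) (X X' : V n) (ctr : Fin (N + 1) → V n) :
    Fin (N + 3) → V n :=
  Fin.snoc (Fin.cons X ctr) X'

/-- The polygonal curve through `X, ctr 0, …, ctr N, X'`, as a subset of `ℝ^{n+1}`: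
the union of the segments joining consecutive vertices. -/
def polyCurve {n : ℕ} (N : ℕ) (X X' : V n) (ctr : Fin (N + 1) → V n) : Set (V n) :=
  ⋃ i : Fin (N + 2), segment ℝ (polyPts N X X' ctr i.castSucc) (polyPts N X X' ctr i.succ)

/-- The length of the polygonal curve through `X, ctr 0, …, ctr N, X'`: the sum of the
lengths of the segments joining consecutive vertices. -/
def polyLength {n : ℕ} (N : ℕ) (X X' : V n) (ctr : Fin (N + 1) → V n) : ℝ :=
  ∑ i : Fin (N + 2), dist (polyPts N X X' ctr i.castSucc) (polyPts N X X' ctr i.succ)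

namespace Statement6Aux

variable {n : ℕ}

lemma setDist_le_dist {A B : Set (V n)} {a b : V n} (ha : a ∈ A) (hb : b ∈ B) :
    setDist A B ≤ dist a b := by
  apply csInf_le
  · exact ⟨0, by rintro d ⟨x, _, y, _, rfl⟩; exact dist_nonneg⟩
  · exact ⟨a, ha, b, hb, rfl⟩

lemma le_setDist {A B : Set (V n)} (hA : A.Nonempty) (hB : B.Nonempty) {d : ℝ}
    (h : ∀ a ∈ A, ∀ b ∈ B, d ≤ dist a b) : d ≤ setDist A B := by
  apply le_csInf
  · obtain ⟨a, ha⟩ := hA; obtain ⟨b, hb⟩ := hB; exact ⟨_, a, ha, b, hb, rfl⟩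
  · rintro e ⟨x, hx, y, hy, rfl⟩; exact h x hx y hy

lemma setDist_le_infDist {S F : Set (V n)} (hF : F.Nonempty)
    {b : V n} (hb : b ∈ S) : setDist S F ≤ Metric.infDist b F := by
  by_contra hlt
  push_neg at hlt
  obtain ⟨y, hy, hdy⟩ := (Metric.infDist_lt_iff hF).1 hlt
  exact absurd (setDist_le_dist hb hy) (not_le.2 hdy)

lemma infDist_le_setDist_add_diam {S F : Set (V n)} (hS : S.Nonempty) (hF : F.Nonempty)
    (hbd : Bornology.IsBounded S) {b : V n} (hb : b ∈ S) :
    Metric.infDist b F ≤ setDist S F + Metric.diam S := by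
  have h : Metric.infDist b F - Metric.diam S ≤ setDist S F := by
    apply le_setDist hS hF
    intro a ha t ht
    have h1 : Metric.infDist b F ≤ dist b t := Metric.infDist_le_dist_of_mem ht
    have h2 : dist b t ≤ dist b a + dist a t := dist_triangle _ _ _
    have h3 : dist b a ≤ Metric.diam S := Metric.dist_le_diam_of_mem hbd hb ha
    linarith
  linarith

lemma radius_le_infDist {Ω : Set (V n)} (hΩ : IsOpen Ω) (hF : (frontier Ω).Nonempty)
    {c : V n} {r : ℝ} (h : Metric.ball c r ⊆ Ω) :
    r ≤ Metric.infDist c (frontier Ω) := by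
  by_contra hlt
  push_neg at hlt
  obtain ⟨y, hy, hdy⟩ := (Metric.infDist_lt_iff hF).1 hlt
  have hyΩ : y ∈ Ω := h (by rw [Metric.mem_ball, dist_comm]; exact hdy)
  rw [hΩ.frontier_eq] at hy
  exact hy.2 hyΩ

lemma two_r_le_diam_ball {c : V n} {r : ℝ} (hr : 0 < r) :
    2 * r ≤ Metric.diam (Metric.ball c r) := by
  obtain ⟨u, hu⟩ := exists_norm_eq (V n) (le_of_lt one_pos)
  have key : ∀ t : ℝ, 0 ≤ t → t < r → 2 * t ≤ Metric.diam (Metric.ball c r) := by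
    intro t ht htr
    have ha : c + t • u ∈ Metric.ball c r := by
      rw [Metric.mem_ball, dist_eq_norm, add_sub_cancel_left, norm_smul, hu,
        Real.norm_of_nonneg ht, mul_one]
      exact htr
    have hb : c - t • u ∈ Metric.ball c r := by
      rw [Metric.mem_ball, dist_eq_norm, sub_sub_cancel_left, norm_neg, norm_smul, hu,
        Real.norm_of_nonneg ht, mul_one]
      exact htr
    have hd : dist (c + t • u) (c - t • u) = 2 * t := by
      rw [dist_eq_norm]
      have he : c + t • u - (c - t • u) = (2 * t) • u := by module
      rw [he, norm_smul, hu, mul_one, Real.norm_of_nonneg (by linarith)]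
    calc 2 * t = dist (c + t • u) (c - t • u) := hd.symm
      _ ≤ Metric.diam (Metric.ball c r) :=
          Metric.dist_le_diam_of_mem Metric.isBounded_ball ha hb
  by_contra hlt
  push_neg at hlt
  have hdnn : 0 ≤ Metric.diam (Metric.ball c r) := Metric.diam_nonneg
  set D := Metric.diam (Metric.ball c r)
  have h1 : D / 2 < r := by linarith
  have := key ((D / 2 + r) / 2) (by linarith) (by linarith)
  linarith

lemma seg_subset_union {p q : V n} {r₁ r₂ : ℝ}
    (h : dist p q < r₁ + r₂) :
    segment ℝ p q ⊆ Metric.ball p r₁ ∪ Metric.ball q r₂ := by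
  rintro Z ⟨a, b, ha, hb, hab, rfl⟩
  have hZp : dist (a • p + b • q) p = b * dist p q := by
    rw [dist_eq_norm]
    have he : a • p + b • q - p = b • (q - p) := by
      have ha' : a = 1 - b := by linarith
      rw [ha']; module
    rw [he, norm_smul, Real.norm_of_nonneg hb, ← dist_eq_norm, dist_comm]
  have hZq : dist (a • p + b • q) q = a * dist p q := by
    rw [dist_eq_norm]
    have he : a • p + b • q - q = a • (p - q) := by
      have hb' : b = 1 - a := by linarith
      rw [hb']; module
    rw [he, norm_smul, Real.norm_of_nonneg ha, ← dist_eq_norm]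
  by_cases hcase : b * dist p q < r₁
  · left; rwa [Metric.mem_ball, hZp]
  · right
    rw [Metric.mem_ball, hZq]
    push_neg at hcase
    have hsum : a * dist p q + b * dist p q = dist p q := by
      rw [← add_mul, hab, one_mul]
    linarith

lemma chain_pow {Nn : ℕ} {A : ℝ} (hA : 1 ≤ A) {f : Fin (Nn + 1) → ℝ}
    (h0 : ∀ k, 0 ≤ f k) (h : ∀ i : Fin Nn, f i.succ ≤ A * f i.castSucc) :
    ∀ k, f k ≤ A ^ Nn * f 0 := by
  have key : ∀ k : Fin (Nn + 1), f k ≤ A ^ (k : ℕ) * f 0 := by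
    intro k
    induction k using Fin.induction with
    | zero => simp
    | succ i ih =>
      calc f i.succ ≤ A * f i.castSucc := h i
        _ ≤ A * (A ^ ((i.castSucc : Fin (Nn+1)) : ℕ) * f 0) :=
            mul_le_mul_of_nonneg_left ih (by linarith)
        _ = A ^ (((i.succ : Fin (Nn+1))) : ℕ) * f 0 := by
            rw [Fin.coe_castSucc, Fin.val_succ, pow_succ]; ring
  intro k
  calc f k ≤ A ^ (k : ℕ) * f 0 := key k
    _ ≤ A ^ Nn * f 0 := by
        apply mul_le_mul_of_nonneg_right _ (h0 0)
        exact pow_le_pow_right₀ (by linarith) (Nat.le_of_lt_succ k.isLt)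

lemma chain_pow' {Nn : ℕ} {A : ℝ} (hA : 1 ≤ A) {f : Fin (Nn + 1) → ℝ}
    (h0 : ∀ k, 0 ≤ f k) (h : ∀ i : Fin Nn, f i.castSucc ≤ A * f i.succ) :
    ∀ k, f 0 ≤ A ^ Nn * f k := by
  have key : ∀ k : Fin (Nn + 1), f 0 ≤ A ^ (k : ℕ) * f k := by
    intro k
    induction k using Fin.induction with
    | zero => simp
    | succ i ih =>
      calc f 0 ≤ A ^ ((i.castSucc : Fin (Nn+1)) : ℕ) * f i.castSucc := ih
        _ ≤ A ^ ((i.castSucc : Fin (Nn+1)) : ℕ) * (A * f i.succ) :=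
            mul_le_mul_of_nonneg_left (h i) (pow_nonneg (by linarith) _)
        _ = A ^ (((i.succ : Fin (Nn+1))) : ℕ) * f i.succ := by
            rw [Fin.coe_castSucc, Fin.val_succ, pow_succ]; ring
  intro k
  calc f 0 ≤ A ^ (k : ℕ) * f k := key k
    _ ≤ A ^ Nn * f k := by
        apply mul_le_mul_of_nonneg_right _ (h0 k)
        exact pow_le_pow_right₀ (by linarith) (Nat.le_of_lt_succ k.isLt)

end Statement6Aux

open Statement6Aux

set_option maxHeartbeats 1000000

/-- Let `Ω ⊆ ℝ^{n+1}` be open with nonempty boundary, `X, X' ∈ Ω`,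
`ρ = min{δ(X), δ(X')}`, `ρ/2 ≤ |X - X'| ≤ Λρ`.  Given a Harnack chain of `N+1` open
balls `B₀, …, B_N ⊆ Ω` joining `X` to `X'` (consecutive balls meeting and
`C₀⁻¹ diam B_k ≤ dist(B_k,∂Ω) ≤ C₀ diam B_k`), the polygonal curve `γ` through
`X`, the centers of the balls, and `X'` lies in `Ω`, has length at most `M|X - X'|`,
and satisfies `δ(Z) ≥ c⋆ · min(|Z-X|, |Z-X'|)` for every `Z ∈ γ`, where `M > 0` and
`c⋆ ∈ (0,1)` depend only on `n, Λ, N, C₀`. -/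
theorem statement6 (n N : ℕ) (Λ C₀ : ℝ) (hΛ : 1 ≤ Λ) (hC₀ : 1 < C₀) :
    ∃ M cs : ℝ, 0 < M ∧ 0 < cs ∧ cs < 1 ∧
      ∀ (Ω : Set (V n)), IsOpen Ω → (frontier Ω).Nonempty →
      ∀ X X' : V n, X ∈ Ω → X' ∈ Ω →
      ∀ (ctr : Fin (N + 1) → V n) (rad : Fin (N + 1) → ℝ),
      (∀ k, Metric.ball (ctr k) (rad k) ⊆ Ω) →
      X ∈ Metric.ball (ctr 0) (rad 0) →
      X' ∈ Metric.ball (ctr (Fin.last N)) (rad (Fin.last N)) →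
      (∀ i : Fin N, (Metric.ball (ctr i.castSucc) (rad i.castSucc) ∩
          Metric.ball (ctr i.succ) (rad i.succ)).Nonempty) →
      (∀ k, C₀⁻¹ * Metric.diam (Metric.ball (ctr k) (rad k)) ≤
              setDist (Metric.ball (ctr k) (rad k)) (frontier Ω) ∧
            setDist (Metric.ball (ctr k) (rad k)) (frontier Ω) ≤
              C₀ * Metric.diam (Metric.ball (ctr k) (rad k))) →
      min (Metric.infDist X (frontier Ω)) (Metric.infDist X' (frontier Ω)) / 2 ≤
        dist X X' →
      dist X X' ≤
        Λ * min (Metric.infDist X (frontier Ω)) (Metric.infDist X' (frontier Ω)) →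
      polyCurve N X X' ctr ⊆ Ω ∧
      polyLength N X X' ctr ≤ M * dist X X' ∧
      ∀ Z ∈ polyCurve N X X' ctr,
        cs * min (dist Z X) (dist Z X') ≤ Metric.infDist Z (frontier Ω) := by
  have hC0 : (0:ℝ) < C₀ := by linarith
  set A : ℝ := C₀ * (C₀ + 1) with hAdef
  have hA1 : (1:ℝ) ≤ A := by nlinarith
  have hApos : (0:ℝ) < A ^ N := pow_pos (by nlinarith) N
  have hApow : (1:ℝ) ≤ A ^ N := one_le_pow₀ hA1
  set Rc : ℝ := A ^ N * (C₀ * (1 + Λ) / 2) with hRcdef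
  set rc : ℝ := 1 / ((2 * C₀ + 2) * A ^ N) with hrcdef
  have hRcpos : 0 < Rc := by
    apply mul_pos hApos; positivity
  have hrcpos : 0 < rc := by
    rw [hrcdef]; positivity
  set cs' : ℝ := 2 * rc / (C₀ * (2 * N + 2) * Rc) with hcs'def
  have hcs'pos : 0 < cs' := by
    rw [hcs'def]; positivity
  refine ⟨4 * Rc * (N + 2), min cs' (1/2), by positivity,
    lt_min hcs'pos (by norm_num), lt_of_le_of_lt (min_le_right _ _) (by norm_num), ?_⟩
  intro Ω hΩ hF X X' hX hX' ctr rad hsub hX0 hXN hinter hC hlow hupp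
  set F := frontier Ω with hFdef
  set d := dist X X' with hddef
  set ρ := min (Metric.infDist X F) (Metric.infDist X' F) with hρdef
  -- positivity of radii
  have hballne : ∀ k, (Metric.ball (ctr k) (rad k)).Nonempty := by
    intro k
    induction k using Fin.cases with
    | zero => exact ⟨X, hX0⟩
    | succ i => obtain ⟨b, _, hb2⟩ := hinter i; exact ⟨b, hb2⟩
  have hrad : ∀ k, 0 < rad k := fun k => Metric.nonempty_ball.1 (hballne k)
  -- setDist bounds in terms of radii
  have hsd_lower : ∀ k, 2 * rad k / C₀ ≤ setDist (Metric.ball (ctr k) (rad k)) F := by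
    intro k
    have h1 := (hC k).1
    have h2 : 2 * rad k ≤ Metric.diam (Metric.ball (ctr k) (rad k)) :=
      two_r_le_diam_ball (hrad k)
    have h3 : C₀⁻¹ * (2 * rad k) ≤ C₀⁻¹ * Metric.diam (Metric.ball (ctr k) (rad k)) :=
      mul_le_mul_of_nonneg_left h2 (by positivity)
    calc 2 * rad k / C₀ = C₀⁻¹ * (2 * rad k) := by rw [div_eq_inv_mul]
      _ ≤ _ := h3.trans h1
  have hsd_upper : ∀ k, setDist (Metric.ball (ctr k) (rad k)) F ≤ 2 * C₀ * rad k := by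
    intro k
    have h1 := (hC k).2
    have h2 : Metric.diam (Metric.ball (ctr k) (rad k)) ≤ 2 * rad k :=
      Metric.diam_ball (le_of_lt (hrad k))
    calc setDist (Metric.ball (ctr k) (rad k)) F ≤
        C₀ * Metric.diam (Metric.ball (ctr k) (rad k)) := h1
      _ ≤ C₀ * (2 * rad k) := mul_le_mul_of_nonneg_left h2 (le_of_lt hC0)
      _ = 2 * C₀ * rad k := by ring
  -- infDist of points of balls
  have hsd_le_inf : ∀ k, ∀ b ∈ Metric.ball (ctr k) (rad k),
      setDist (Metric.ball (ctr k) (rad k)) F ≤ Metric.infDist b F := by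
    intro k b hb; exact setDist_le_infDist hF hb
  have hinf_le_sd : ∀ k, ∀ b ∈ Metric.ball (ctr k) (rad k),
      Metric.infDist b F ≤ setDist (Metric.ball (ctr k) (rad k)) F + 2 * rad k := by
    intro k b hb
    have := infDist_le_setDist_add_diam (F := F) (hballne k) hF Metric.isBounded_ball hb
    have h2 : Metric.diam (Metric.ball (ctr k) (rad k)) ≤ 2 * rad k :=
      Metric.diam_ball (le_of_lt (hrad k))
    linarith
  -- adjacent ball comparisons
  have hadj : ∀ i : Fin N,
      dist (ctr i.castSucc) (ctr i.succ) < rad i.castSucc + rad i.succ := by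
    intro i
    obtain ⟨b, hb1, hb2⟩ := hinter i
    calc dist (ctr i.castSucc) (ctr i.succ)
        ≤ dist (ctr i.castSucc) b + dist b (ctr i.succ) := dist_triangle _ _ _
      _ < rad i.castSucc + rad i.succ := by
          rw [Metric.mem_ball] at hb1 hb2
          rw [dist_comm (ctr i.castSucc) b]
          rw [dist_comm b (ctr i.succ)] at hb2
          rw [dist_comm b (ctr i.succ)]
          exact add_lt_add hb1 hb2
  have hchain_up : ∀ i : Fin N, rad i.succ ≤ A * rad i.castSucc := by
    intro i
    obtain ⟨b, hb1, hb2⟩ := hinter i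
    have h1 : 2 * rad i.succ / C₀ ≤ Metric.infDist b F :=
      (hsd_lower i.succ).trans (hsd_le_inf i.succ b hb2)
    have h2 : Metric.infDist b F ≤ 2 * C₀ * rad i.castSucc + 2 * rad i.castSucc := by
      have := hinf_le_sd i.castSucc b hb1
      have := hsd_upper i.castSucc
      linarith
    have h3 : 2 * rad i.succ / C₀ ≤ 2 * C₀ * rad i.castSucc + 2 * rad i.castSucc :=
      h1.trans h2
    rw [div_le_iff₀ hC0] at h3
    have h4 : (2 * C₀ * rad i.castSucc + 2 * rad i.castSucc) * C₀ = 2 * A * rad i.castSucc := by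
      rw [hAdef]; ring
    linarith
  have hchain_down : ∀ i : Fin N, rad i.castSucc ≤ A * rad i.succ := by
    intro i
    obtain ⟨b, hb1, hb2⟩ := hinter i
    have h1 : 2 * rad i.castSucc / C₀ ≤ Metric.infDist b F :=
      (hsd_lower i.castSucc).trans (hsd_le_inf i.castSucc b hb1)
    have h2 : Metric.infDist b F ≤ 2 * C₀ * rad i.succ + 2 * rad i.succ := by
      have := hinf_le_sd i.succ b hb2
      have := hsd_upper i.succ
      linarith
    have h3 := h1.trans h2
    rw [div_le_iff₀ hC0] at h3
    have h4 : (2 * C₀ * rad i.succ + 2 * rad i.succ) * C₀ = 2 * A * rad i.succ := by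
      rw [hAdef]; ring
    linarith
  have hradnn : ∀ k, 0 ≤ rad k := fun k => le_of_lt (hrad k)
  have hup : ∀ k, rad k ≤ A ^ N * rad 0 := chain_pow hA1 hradnn hchain_up
  have hdown : ∀ k, rad 0 ≤ A ^ N * rad k := chain_pow' hA1 hradnn hchain_down
  -- rad 0 versus ρ
  have hρX : ρ ≤ Metric.infDist X F := min_le_left _ _
  have hdist_nonneg : (0:ℝ) ≤ d := dist_nonneg
  have hXle : Metric.infDist X F ≤ (1 + Λ) * ρ := by
    have h1 : Metric.infDist X F ≤ Metric.infDist X' F + d :=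
      Metric.infDist_le_infDist_add_dist (x := X) (y := X') (s := F)
    have h2 : Metric.infDist X F ≤ ρ + d := by
      rcases le_total (Metric.infDist X F) (Metric.infDist X' F) with hle | hle
      · have : ρ = Metric.infDist X F := min_eq_left hle
        linarith
      · have : ρ = Metric.infDist X' F := min_eq_right hle
        linarith
    have h3 : d ≤ Λ * ρ := hupp
    linarith
  have hr0_up : rad 0 ≤ C₀ * (1 + Λ) / 2 * ρ := by
    have h1 : 2 * rad 0 / C₀ ≤ Metric.infDist X F :=
      (hsd_lower 0).trans (hsd_le_inf 0 X hX0)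
    rw [div_le_iff₀ hC0] at h1
    nlinarith
  have hρpos_aux : 0 ≤ ρ := by
    have h0 : 0 ≤ Metric.infDist X F := Metric.infDist_nonneg
    have h0' : 0 ≤ Metric.infDist X' F := Metric.infDist_nonneg
    exact le_min h0 h0'
  have hr0_down : ρ / (2 * C₀ + 2) ≤ rad 0 := by
    have h1 : Metric.infDist X F ≤ 2 * C₀ * rad 0 + 2 * rad 0 := by
      have := hinf_le_sd 0 X hX0
      have := hsd_upper 0
      linarith
    have h2 : ρ ≤ (2 * C₀ + 2) * rad 0 := by
      have := hρX; nlinarith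
    rw [div_le_iff₀ (by linarith)]
    nlinarith
  -- uniform bounds on radii
  have hradup : ∀ k, rad k ≤ Rc * ρ := by
    intro k
    calc rad k ≤ A ^ N * rad 0 := hup k
      _ ≤ A ^ N * (C₀ * (1 + Λ) / 2 * ρ) :=
          mul_le_mul_of_nonneg_left hr0_up (le_of_lt hApos)
      _ = Rc * ρ := by rw [hRcdef]; ring
  have hraddown : ∀ k, rc * ρ ≤ rad k := by
    intro k
    have h1 : ρ ≤ (2 * C₀ + 2) * rad 0 := by
      have := hr0_down; rw [div_le_iff₀ (by linarith)] at this; linarith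
    have h2 := hdown k
    rw [hrcdef, one_div, inv_mul_le_iff₀ (by positivity)]
    calc ρ ≤ (2 * C₀ + 2) * rad 0 := h1
      _ ≤ (2 * C₀ + 2) * (A ^ N * rad k) :=
          mul_le_mul_of_nonneg_left h2 (by linarith)
      _ = (2 * C₀ + 2) * A ^ N * rad k := by ring
  have hRρpos : 0 < Rc * ρ := lt_of_lt_of_le (hrad 0) (hradup 0)
  have hρ2d : ρ ≤ 2 * d := by
    have := hlow; linarith
  -- master segment lemma
  have hseg : ∀ i : Fin (N + 2),
      (segment ℝ (polyPts N X X' ctr i.castSucc) (polyPts N X X' ctr i.succ) ⊆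
        ⋃ k, Metric.ball (ctr k) (rad k)) ∧
      dist (polyPts N X X' ctr i.castSucc) (polyPts N X X' ctr i.succ) ≤ 2 * (Rc * ρ) := by
    intro i
    induction i using Fin.lastCases with
    | last =>
      have e1 : polyPts N X X' ctr (Fin.last (N + 1)).succ = X' := by
        rw [Fin.succ_last]; exact Fin.snoc_last _ _
      have e2 : polyPts N X X' ctr (Fin.last (N + 1)).castSucc = ctr (Fin.last N) := by
        rw [polyPts, Fin.snoc_castSucc, ← Fin.succ_last, Fin.cons_succ]
      rw [e1, e2]
      constructor
      · intro Z hZ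
        refine mem_iUnion.2 ⟨Fin.last N, ?_⟩
        exact (convex_ball _ _).segment_subset (Metric.mem_ball_self (hrad _)) hXN hZ
      · have h1 : dist (ctr (Fin.last N)) X' < rad (Fin.last N) := by
          rw [dist_comm]; exact hXN
        have := hradup (Fin.last N)
        linarith
    | cast j =>
      have e2 : polyPts N X X' ctr j.castSucc.succ = ctr j := by
        rw [Fin.succ_castSucc, polyPts, Fin.snoc_castSucc, Fin.cons_succ]
      rcases Fin.eq_zero_or_eq_succ j with rfl | ⟨m, rfl⟩
      · have e1 : polyPts N X X' ctr ((0 : Fin (N+1)).castSucc).castSucc = X := by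
          rw [polyPts, Fin.snoc_castSucc, Fin.castSucc_zero, Fin.cons_zero]
        rw [e1, e2]
        constructor
        · intro Z hZ
          refine mem_iUnion.2 ⟨0, ?_⟩
          exact (convex_ball _ _).segment_subset hX0 (Metric.mem_ball_self (hrad _)) hZ
        · have h1 : dist X (ctr 0) < rad 0 := hX0
          have := hradup 0
          linarith
      · have e1 : polyPts N X X' ctr ((m.succ).castSucc).castSucc = ctr m.castSucc := by
          rw [polyPts, Fin.snoc_castSucc, ← Fin.succ_castSucc, Fin.cons_succ]
        rw [e1, e2]
        have hd := hadj m
        constructor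
        · intro Z hZ
          rcases seg_subset_union hd hZ with h | h
          · exact mem_iUnion.2 ⟨m.castSucc, h⟩
          · exact mem_iUnion.2 ⟨m.succ, h⟩
        · have h1 := hradup m.castSucc
          have h2 := hradup m.succ
          linarith
  have hcurve : polyCurve N X X' ctr ⊆ ⋃ k, Metric.ball (ctr k) (rad k) := by
    intro Z hZ
    obtain ⟨i, hi⟩ := mem_iUnion.1 hZ
    exact (hseg i).1 hi
  have hγΩ : polyCurve N X X' ctr ⊆ Ω :=
    hcurve.trans (iUnion_subset fun k => hsub k)
  refine ⟨hγΩ, ?_, ?_⟩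
  -- length bound
  · rw [polyLength]
    calc (∑ i : Fin (N + 2),
          dist (polyPts N X X' ctr i.castSucc) (polyPts N X X' ctr i.succ))
        ≤ ∑ _i : Fin (N + 2), 2 * (Rc * ρ) :=
          Finset.sum_le_sum fun i _ => (hseg i).2
      _ = (N + 2) * (2 * (Rc * ρ)) := by
          rw [Finset.sum_const, Finset.card_univ, Fintype.card_fin, nsmul_eq_mul]
          push_cast; ring
      _ ≤ (N + 2) * (2 * (Rc * (2 * d))) := by
          apply mul_le_mul_of_nonneg_left _ (by positivity)
          have : Rc * ρ ≤ Rc * (2 * d) :=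
            mul_le_mul_of_nonneg_left hρ2d (le_of_lt hRcpos)
          linarith
      _ = 4 * Rc * (N + 2) * d := by ring
  -- lower bound on distance to boundary
  · have hc0dist : ∀ k : Fin (N + 1),
        dist (ctr 0) (ctr k) ≤ 2 * (k : ℕ) * (Rc * ρ) := by
      intro k
      induction k using Fin.induction with
      | zero => simp
      | succ i ih =>
        have hstep : dist (ctr i.castSucc) (ctr i.succ) ≤ 2 * (Rc * ρ) := by
          have := hadj i
          have h1 := hradup i.castSucc
          have h2 := hradup i.succ
          linarith
        have hcast : ((i.castSucc : Fin (N+1)) : ℕ) = (i : ℕ) := Fin.coe_castSucc i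
        calc dist (ctr 0) (ctr i.succ)
            ≤ dist (ctr 0) (ctr i.castSucc) + dist (ctr i.castSucc) (ctr i.succ) :=
              dist_triangle _ _ _
          _ ≤ 2 * (i : ℕ) * (Rc * ρ) + 2 * (Rc * ρ) := by
              rw [hcast] at ih; linarith
          _ = 2 * ((i : ℕ) + 1) * (Rc * ρ) := by ring
          _ = 2 * ((i.succ : Fin (N+1)) : ℕ) * (Rc * ρ) := by
              rw [Fin.val_succ]; push_cast; ring
    intro Z hZ
    obtain ⟨k, hk⟩ := mem_iUnion.1 (hcurve hZ)
    have hδ : 2 * (rc * ρ) / C₀ ≤ Metric.infDist Z F := by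
      have h1 : 2 * rad k / C₀ ≤ Metric.infDist Z F :=
        (hsd_lower k).trans (hsd_le_inf k Z hk)
      have h2 := hraddown k
      have : 2 * (rc * ρ) / C₀ ≤ 2 * rad k / C₀ := by
        gcongr
      linarith
    have hZX : dist Z X ≤ (2 * N + 2) * (Rc * ρ) := by
      have h1 : dist Z (ctr k) < rad k := Metric.mem_ball.1 hk
      have h2 : dist (ctr k) (ctr 0) ≤ 2 * N * (Rc * ρ) := by
        rw [dist_comm]
        have := hc0dist k
        have hkN : ((k : ℕ) : ℝ) ≤ (N : ℝ) := by
          exact_mod_cast Nat.le_of_lt_succ k.isLt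
        nlinarith [le_of_lt hRρpos]
      have h3 : dist (ctr 0) X < rad 0 := by
        rw [dist_comm]; exact hX0
      have h4 := hradup k
      have h5 := hradup 0
      calc dist Z X ≤ dist Z (ctr k) + dist (ctr k) (ctr 0) + dist (ctr 0) X :=
            dist_triangle4 _ _ _ _
        _ ≤ (2 * N + 2) * (Rc * ρ) := by linarith
    have hmin_le : min (dist Z X) (dist Z X') ≤ (2 * N + 2) * (Rc * ρ) :=
      (min_le_left _ _).trans hZX
    have hmin_nn : 0 ≤ min (dist Z X) (dist Z X') := le_min dist_nonneg dist_nonneg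
    have hkey : cs' * ((2 * N + 2) * (Rc * ρ)) = 2 * (rc * ρ) / C₀ := by
      rw [hcs'def]
      field_simp
    calc min cs' (1/2) * min (dist Z X) (dist Z X')
        ≤ cs' * min (dist Z X) (dist Z X') :=
          mul_le_mul_of_nonneg_right (min_le_left _ _) hmin_nn
      _ ≤ cs' * ((2 * N + 2) * (Rc * ρ)) :=
          mul_le_mul_of_nonneg_left hmin_le (le_of_lt hcs'pos)
      _ = 2 * (rc * ρ) / C₀ := hkey
      _ ≤ Metric.infDist Z F := hδ
end
end

section
/- Let n ≥ 1 and let Ω ⊆ ℝ^{n+1} be a (c,C)-uniform domain which also satisfies the interior corkscrew condition with constant c, and let ε > 0 be small enough depending only on c and C (any ε < min{ c/(4(2C+1)), 1/2 } works) so that the bilateral flatness dichotomy holds. Suppose x ∈ ∂Ω, 0 < r < diam ∂Ω, P is an affine hyperplane with unit normal v, and bβ_{∂Ω}(x,r,P) < ε. Then there exists a point X⁻ with B(X⁻, r/4) ⊆ B(x,r) \ closure(Ω); that is, B(x,r) contains an exterior corkscrew ball of radius r/4. (One may take X⁻ = x + s·((1+ε)/2) r v for the appropriate sign s ∈ {+1,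 −1}.) -/
open Metric Set
open scoped RealInnerProductSpace ENNReal

noncomputable section

/-- Translating by a multiple of the unit normal shifts the defining functional. -/
lemma aux_inner_shift {n : ℕ} (x a v : V n) (hv : ‖v‖ = 1) (t : ℝ) :
    ⟪(x + t • v) - a, v⟫ = ⟪x - a, v⟫ + t := by
  have h : (x + t • v) - a = (x - a) + t • v := by abel
  rw [h, inner_add_left, real_inner_smul_left, real_inner_self_eq_norm_sq, hv]
  ring

/-- Lower bound: the distance to the hyperplane dominates the defining functional. -/
lemma aux_abs_le_infDist {n : ℕ} (a v y : V n) (hv : ‖v‖ = 1) :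
    |⟪y - a, v⟫| ≤ Metric.infDist y {p : V n | ⟪p - a, v⟫ = 0} := by
  by_contra hcon
  push_neg at hcon
  have hne : ({p : V n | ⟪p - a, v⟫ = 0}).Nonempty := ⟨a, by simp⟩
  obtain ⟨p, hp, hdp⟩ := (Metric.infDist_lt_iff hne).mp hcon
  have hp0 : ⟪p - a, v⟫ = 0 := hp
  have h1 : ⟪y - a, v⟫ - ⟪p - a, v⟫ = ⟪y - p, v⟫ := by
    rw [← inner_sub_left]; congr 1; abel
  have h2 : |⟪y - p, v⟫| ≤ ‖y - p‖ := by
    have := abs_real_inner_le_norm (y - p) v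
    rwa [hv, mul_one] at this
  rw [dist_eq_norm] at hdp
  have : |⟪y - a, v⟫| = |⟪y - p, v⟫| := by rw [← h1, hp0, sub_zero]
  linarith [this ▸ h2]

/-- Upper bound: the distance to the hyperplane is at most the defining functional. -/
lemma aux_infDist_le_abs {n : ℕ} (a v y : V n) (hv : ‖v‖ = 1) :
    Metric.infDist y {p : V n | ⟪p - a, v⟫ = 0} ≤ |⟪y - a, v⟫| := by
  have hmem : y - ⟪y - a, v⟫ • v ∈ {p : V n | ⟪p - a, v⟫ = 0} := by
    show ⟪(y - ⟪y - a, v⟫ • v) - a, v⟫ = 0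
    have h : (y - ⟪y - a, v⟫ • v) - a = (y - a) - ⟪y - a, v⟫ • v := by abel
    rw [h, inner_sub_left, real_inner_smul_left, real_inner_self_eq_norm_sq, hv]
    ring
  calc Metric.infDist y {p : V n | ⟪p - a, v⟫ = 0}
      ≤ dist y (y - ⟪y - a, v⟫ • v) := Metric.infDist_le_dist_of_mem hmem
    _ = |⟪y - a, v⟫| := by
        rw [dist_eq_norm]
        have h : y - (y - ⟪y - a, v⟫ • v) = ⟪y - a, v⟫ • v := by abel
        rw [h, norm_smul, hv, mul_one, Real.norm_eq_abs]

/-- A convex set avoiding the frontier of an open set lies inside it or outside its closure. -/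
lemma aux_dichotomy {n : ℕ} (Ω : Set (V n)) (hΩopen : IsOpen Ω) (S : Set (V n))
    (hconv : Convex ℝ S) (hdisj : ∀ y ∈ S, y ∉ frontier Ω) :
    S ⊆ Ω ∨ S ⊆ (closure Ω)ᶜ := by
  have hcover : S ⊆ Ω ∪ (closure Ω)ᶜ := by
    intro y hy
    by_cases hcl : y ∈ closure Ω
    · left
      by_contra hyΩ
      exact hdisj y hy ⟨hcl, by rwa [hΩopen.interior_eq]⟩
    · exact Or.inr hcl
  exact IsPreconnected.subset_or_subset hΩopen (isClosed_closure.isOpen_compl)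
    (disjoint_compl_right.mono_left subset_closure) hcover hconv.isPreconnected

/-- Half-spaces determined by the inner product with `v` are convex. -/
lemma aux_convex_halfspace_gt {n : ℕ} (x v : V n) (k : ℝ) :
    Convex ℝ {y : V n | k < ⟪y - x, v⟫} := by
  intro y₁ h₁ y₂ h₂ p q hp hq hpq
  simp only [mem_setOf_eq] at h₁ h₂ ⊢
  have hx : (p • y₁ + q • y₂) - x = p • (y₁ - x) + q • (y₂ - x) := by
    have h : p • (y₁ - x) + q • (y₂ - x) = (p • y₁ + q • y₂) - (p + q) • x := by
      rw [smul_sub, smul_sub, add_smul]; abel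
    rw [h, hpq, one_smul]
  rw [hx, inner_add_left, real_inner_smul_left, real_inner_smul_left]
  rcases hp.eq_or_lt.imp_left Eq.symm with hp0 | hp0
  · have hq1 : q = 1 := by linarith
    rw [hp0, hq1, zero_mul, one_mul, zero_add]
    exact h₂
  · have hk : p * k + q * k = k := by rw [← add_mul, hpq, one_mul]
    have h1 := mul_lt_mul_of_pos_left h₁ hp0
    have h2 := mul_le_mul_of_nonneg_left h₂.le hq
    linarith

lemma aux_convex_halfspace_lt {n : ℕ} (x v : V n) (k : ℝ) :
    Convex ℝ {y : V n | ⟪y - x, v⟫ < k} := by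
  have h := aux_convex_halfspace_gt x (-v) (-k)
  have heq : {y : V n | ⟪y - x, v⟫ < k} = {y : V n | -k < ⟪y - x, -v⟫} := by
    ext y; simp only [mem_setOf_eq, inner_neg_right]; constructor <;> intro <;> linarith
  rw [heq]; exact h

set_option maxHeartbeats 1000000 in
/-- Let `Ω ⊆ ℝ^{n+1}` be a `(c,C)`-uniform domain satisfying the interior
corkscrew condition with constant `c`, and let `0 < ε < min{c/(4(2C+1)), 1/2}`.
If `x ∈ ∂Ω`, `0 < r < diam ∂Ω`, and `P` is an affine hyperplane with unit normal `v`
such that `bβ_{∂Ω}(x,r,P) < ε`, then `B(x,r)` contains an exterior corkscrew ball of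
radius `r/4`; indeed one may take the center `X⁻ = x + s·((1+ε)/2)·r·v` for the
appropriate sign `s ∈ {+1, -1}`. -/
theorem statement9 (n : ℕ) (hn : 1 ≤ n) (c C : ℝ) (hc₀ : 0 < c) (hc₁ : c < 1) (hC : 1 < C)
    (ε : ℝ) (hε : 0 < ε) (hεk : ε < min (c / (4 * (2 * C + 1))) (1 / 2))
    (Ω : Set (V n)) (hΩopen : IsOpen Ω) (hΩunif : IsUniform c C Ω) (hcork : IntCorkscrew c Ω)
    (x : V n) (hx : x ∈ frontier Ω) (r : ℝ) (hr : 0 < r)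
    (hrdiam : ENNReal.ofReal r < EMetric.diam (frontier Ω))
    (v a : V n) (hv : ‖v‖ = 1)
    (hβ : bbeta (frontier Ω) {p : V n | ⟪p - a, v⟫ = 0} x r < ε) :
    ∃ s : ℝ, (s = 1 ∨ s = -1) ∧
      Metric.ball (x + (s * ((1 + ε) / 2) * r) • v) (r / 4) ⊆
        Metric.ball x r \ closure Ω := by
  have hCpos : (0:ℝ) < 2 * C + 1 := by linarith
  have hεc : ε < c / (4 * (2 * C + 1)) := lt_of_lt_of_le hεk (min_le_left _ _)
  have hεhalf : ε < 1 / 2 := lt_of_lt_of_le hεk (min_le_right _ _)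
  have hε12 : ε < 1 / 12 := by
    have : c / (4 * (2 * C + 1)) < 1 / 12 := by
      rw [div_lt_div_iff₀ (by linarith) (by norm_num)]
      nlinarith
    linarith
  set P : Set (V n) := {p : V n | ⟪p - a, v⟫ = 0} with hPdef
  -- the two suprema in the beta number
  set A : ℝ := ⨆ y : ↥(frontier Ω ∩ Metric.ball x r), Metric.infDist (y : V n) P with hAdef
  set B : ℝ := ⨆ y : ↥(P ∩ Metric.ball x r), Metric.infDist (y : V n) (frontier Ω) with hBdef
  have hA0 : 0 ≤ A := Real.iSup_nonneg fun y => Metric.infDist_nonneg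
  have hB0 : 0 ≤ B := Real.iSup_nonneg fun y => Metric.infDist_nonneg
  have hAbdd : BddAbove (range fun y : ↥(frontier Ω ∩ Metric.ball x r) =>
      Metric.infDist (y : V n) P) := by
    refine ⟨dist x a + r, ?_⟩
    rintro _ ⟨⟨y, hy, hyb⟩, rfl⟩
    have h1 : Metric.infDist y P ≤ dist y a :=
      Metric.infDist_le_dist_of_mem (by simp [hPdef])
    have h2 : dist y a ≤ dist y x + dist x a := dist_triangle _ _ _
    have h3 : dist y x < r := mem_ball.mp hyb
    simp only
    linarith
  have hBbdd : BddAbove (range fun y : ↥(P ∩ Metric.ball x r) =>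
      Metric.infDist (y : V n) (frontier Ω)) := by
    refine ⟨r, ?_⟩
    rintro _ ⟨⟨y, hy, hyb⟩, rfl⟩
    have h1 : Metric.infDist y (frontier Ω) ≤ dist y x :=
      Metric.infDist_le_dist_of_mem hx
    have h3 : dist y x < r := mem_ball.mp hyb
    simp only
    linarith
  have hAB : A + B < ε * r := by
    have h := hβ
    rw [bbeta, ← hAdef, ← hBdef] at h
    have h2 := mul_lt_mul_of_pos_left h hr
    rw [← mul_assoc, mul_inv_cancel₀ hr.ne', one_mul] at h2
    linarith [h2, mul_comm r ε ▸ h2]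
  have hAlt : A < ε * r := by linarith
  have hBlt : B < ε * r := by linarith
  -- points of the frontier inside the ball are close to the plane
  have hfr_close : ∀ y, y ∈ frontier Ω → y ∈ Metric.ball x r → |⟪y - a, v⟫| < ε * r := by
    intro y hy hyb
    have h1 : Metric.infDist y P ≤ A := le_ciSup hAbdd (⟨y, hy, hyb⟩ : ↥(frontier Ω ∩ Metric.ball x r))
    have h2 := aux_abs_le_infDist a v y hv
    rw [← hPdef] at h2
    linarith
  -- points of the plane inside the ball are close to the frontier
  have hpl_close : ∀ y, y ∈ P → y ∈ Metric.ball x r → Metric.infDist y (frontier Ω) < ε * r := by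
    intro y hy hyb
    have h1 : Metric.infDist y (frontier Ω) ≤ B :=
      le_ciSup hBbdd (⟨y, hy, hyb⟩ : ↥(P ∩ Metric.ball x r))
    linarith
  have hhx : |⟪x - a, v⟫| < ε * r := hfr_close x hx (mem_ball_self hr)
  -- the two side regions
  set Sp : Set (V n) := Metric.ball x r ∩ {y : V n | 2 * ε * r < ⟪y - x, v⟫} with hSpdef
  set Sm : Set (V n) := Metric.ball x r ∩ {y : V n | ⟪y - x, v⟫ < -(2 * ε * r)} with hSmdef
  have hinnerdiff : ∀ y : V n, ⟪y - x, v⟫ = ⟪y - a, v⟫ - ⟪x - a, v⟫ := by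
    intro y
    rw [← inner_sub_left]
    congr 1
    abel
  have hSpfr : ∀ y ∈ Sp, y ∉ frontier Ω := by
    rintro y ⟨hyb, hyh⟩ hyfr
    have h1 := hfr_close y hyfr hyb
    have h2 : (2:ℝ) * ε * r < ⟪y - x, v⟫ := hyh
    rw [hinnerdiff y] at h2
    have := abs_lt.mp h1
    have := abs_lt.mp hhx
    linarith [this.1, this.2]
  have hSmfr : ∀ y ∈ Sm, y ∉ frontier Ω := by
    rintro y ⟨hyb, hyh⟩ hyfr
    have h1 := hfr_close y hyfr hyb
    have h2 : ⟪y - x, v⟫ < -(2 * ε * r) := hyh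
    rw [hinnerdiff y] at h2
    have := abs_lt.mp h1
    have := abs_lt.mp hhx
    linarith [this.1, this.2]
  have hSpconv : Convex ℝ Sp := (convex_ball x r).inter (aux_convex_halfspace_gt x v _)
  have hSmconv : Convex ℝ Sm := (convex_ball x r).inter (aux_convex_halfspace_lt x v _)
  have hSpdich := aux_dichotomy Ω hΩopen Sp hSpconv hSpfr
  have hSmdich := aux_dichotomy Ω hΩopen Sm hSmconv hSmfr
  -- the candidate balls are contained in the corresponding side regions
  have hball : ∀ s : ℝ, s = 1 ∨ s = -1 →
      ∀ y ∈ Metric.ball (x + (s * ((1 + ε) / 2) * r) • v) (r / 4),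
        y ∈ Metric.ball x r ∧ 2 * ε * r < s * ⟪y - x, v⟫ := by
    intro s hs y hy
    have hs2 : s * s = 1 := by rcases hs with h | h <;> rw [h] <;> norm_num
    have habss : |s| = 1 := by rcases hs with h | h <;> rw [h] <;> norm_num
    set t : ℝ := s * ((1 + ε) / 2) * r with htdef
    have habt : |t| = (1 + ε) / 2 * r := by
      rw [htdef, abs_mul, abs_mul, habss, one_mul,
        abs_of_pos (show (0:ℝ) < (1 + ε) / 2 by linarith), abs_of_pos hr]
    have hdc : dist (x + t • v) x = |t| := by
      rw [dist_eq_norm]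
      have h : (x + t • v) - x = t • v := by abel
      rw [h, norm_smul, hv, mul_one, Real.norm_eq_abs]
    have hy' : dist y (x + t • v) < r / 4 := mem_ball.mp hy
    have hsplit : ⟪y - x, v⟫ = ⟪y - (x + t • v), v⟫ + t := by
      have h : y - x = (y - (x + t • v)) + t • v := by abel
      rw [h, inner_add_left, real_inner_smul_left, real_inner_self_eq_norm_sq, hv]
      ring
    have habs2 : |⟪y - (x + t • v), v⟫| ≤ ‖y - (x + t • v)‖ := by
      have := abs_real_inner_le_norm (y - (x + t • v)) v
      rwa [hv, mul_one] at this
    have hnorm : ‖y - (x + t • v)‖ < r / 4 := by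
      rw [← dist_eq_norm]; exact hy'
    constructor
    · rw [mem_ball]
      have h1 := dist_triangle y (x + t • v) x
      rw [hdc, habt] at h1
      linarith [mul_pos hr (show (0:ℝ) < 1 / 2 - ε by linarith)]
    · have hst : s * t = (1 + ε) / 2 * r := by
        rw [htdef]
        linear_combination ((1 + ε) / 2 * r) * hs2
      rw [hsplit, mul_add, hst]
      have h5 : -(r / 4) < s * ⟪y - (x + t • v), v⟫ := by
        have hn := neg_abs_le (s * ⟪y - (x + t • v), v⟫)
        rw [abs_mul, habss, one_mul] at hn
        have h6 := lt_of_le_of_lt habs2 hnorm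
        linarith
      linarith [h5, mul_pos hr (show (0:ℝ) < 1 / 6 - ε by linarith)]
  -- not both sides can lie in Ω
  have hnotboth : ¬ (Sp ⊆ Ω ∧ Sm ⊆ Ω) := by
    rintro ⟨hSpΩ, hSmΩ⟩
    set δ : ℝ := r / (2 * (2 * C + 1)) with hδdef
    have hδpos : 0 < δ := by positivity
    have hδr : δ < r := by
      rw [hδdef, div_lt_iff₀ (by linarith)]
      nlinarith
    have hδ2ε : 2 * ε * r < δ := by
      rw [hδdef, lt_div_iff₀ (by linarith)]
      have hεc' : ε * (4 * (2 * C + 1)) < c := (lt_div_iff₀ (by linarith)).mp hεc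
      nlinarith
    set X : V n := x + δ • v with hXdef
    set Y : V n := x - δ • v with hYdef
    have hXSp : X ∈ Sp := by
      constructor
      · rw [mem_ball, dist_eq_norm]
        have h : X - x = δ • v := by rw [hXdef]; abel
        rw [h, norm_smul, hv, mul_one, Real.norm_eq_abs, abs_of_pos hδpos]
        exact hδr
      · show 2 * ε * r < ⟪X - x, v⟫
        have h : X - x = δ • v := by rw [hXdef]; abel
        rw [h, real_inner_smul_left, real_inner_self_eq_norm_sq, hv]
        simpa using hδ2ε
    have hYSm : Y ∈ Sm := by
      constructor
      · rw [mem_ball, dist_eq_norm]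
        have h : Y - x = (-δ) • v := by rw [hYdef, neg_smul]; abel
        rw [h, norm_smul, hv, mul_one, Real.norm_eq_abs, abs_of_neg (by linarith), neg_neg]
        exact hδr
      · show ⟪Y - x, v⟫ < -(2 * ε * r)
        have h : Y - x = (-δ) • v := by rw [hYdef, neg_smul]; abel
        rw [h, real_inner_smul_left, real_inner_self_eq_norm_sq, hv]
        norm_num
        linarith
    obtain ⟨γ, hγcont, hγ0, hγ1, hγΩ, hγvar, hγcork⟩ := hΩunif X (hSpΩ hXSp) Y (hSmΩ hYSm)
    -- the height function along the curve
    have hXY : dist X Y = 2 * δ := by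
      rw [dist_eq_norm]
      have h : X - Y = (2 * δ) • v := by
        rw [hXdef, hYdef, mul_smul]
        rw [two_smul]
        abel
      rw [h, norm_smul, hv, mul_one, Real.norm_eq_abs, abs_of_pos (by linarith)]
    have hcont : Continuous fun y : V n => ⟪y - a, v⟫ :=
      (continuous_id.sub continuous_const).inner continuous_const
    have hgcont : ContinuousOn (fun s : ℝ => ⟪γ s - a, v⟫) (Set.Icc 0 1) :=
      hcont.comp_continuousOn hγcont
    have hhX : ⟪X - a, v⟫ = ⟪x - a, v⟫ + δ := aux_inner_shift x a v hv δ
    have hhY : ⟪Y - a, v⟫ = ⟪x - a, v⟫ - δ := by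
      have h := aux_inner_shift x a v hv (-δ)
      have heq : x + (-δ) • v = Y := by rw [hYdef, neg_smul]; abel
      rw [heq] at h
      rw [h]; ring
    have habsx := abs_lt.mp hhx
    have hg0 : (0:ℝ) ∈ Set.Icc (⟪γ 1 - a, v⟫) (⟪γ 0 - a, v⟫) := by
      rw [hγ0, hγ1, hhX, hhY]
      constructor <;> [linarith; linarith]
    obtain ⟨t₀, ht₀, hZ0⟩ := intermediate_value_Icc' zero_le_one hgcont hg0
    set Z : V n := γ t₀ with hZdef
    have hZP : Z ∈ P := hZ0
    -- Z lies in the ball B(x,r)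
    have hZX : dist Z X ≤ C * (2 * δ) := by
      have h1 : edist (γ t₀) (γ 0) ≤ eVariationOn γ (Set.Icc 0 1) :=
        eVariationOn.edist_le γ ht₀ (Set.mem_Icc.mpr ⟨le_refl 0, zero_le_one⟩)
      have h2 : edist (γ t₀) (γ 0) ≤ ENNReal.ofReal (C * dist X Y) := le_trans h1 hγvar
      rw [edist_dist] at h2
      have h3 : dist (γ t₀) (γ 0) ≤ C * dist X Y :=
        (ENNReal.ofReal_le_ofReal_iff (by positivity)).mp h2
      rw [hγ0, hXY] at h3
      exact h3
    have hZball : Z ∈ Metric.ball x r := by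
      rw [mem_ball]
      have h1 : dist Z x ≤ dist Z X + dist X x := dist_triangle _ _ _
      have h2 : dist X x = δ := by
        rw [dist_eq_norm]
        have h : X - x = δ • v := by rw [hXdef]; abel
        rw [h, norm_smul, hv, mul_one, Real.norm_eq_abs, abs_of_pos hδpos]
      have h3 : C * (2 * δ) + δ = (2 * C + 1) * δ := by ring
      have h4 : (2 * C + 1) * δ = r / 2 := by
        rw [hδdef]; field_simp
      linarith
    -- the plane proximity bound at Z
    have hZnear : Metric.infDist Z (frontier Ω) < ε * r := hpl_close Z hZP hZball
    -- the uniformity lower bound at Z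
    have hcZ := hγcork t₀ ht₀
    have hZXlb : δ - ε * r ≤ dist Z X := by
      have h1 : |⟪Z - X, v⟫| ≤ ‖Z - X‖ := by
        have := abs_real_inner_le_norm (Z - X) v
        rwa [hv, mul_one] at this
      have h2 : ⟪Z - X, v⟫ = ⟪Z - a, v⟫ - ⟪X - a, v⟫ := by
        rw [← inner_sub_left]; congr 1; abel
      have h3 : ⟪Z - a, v⟫ = 0 := hZ0
      rw [h2, h3, hhX] at h1
      rw [dist_eq_norm]
      have h5 : δ - ε * r ≤ |0 - (⟪x - a, v⟫ + δ)| := by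
        rw [zero_sub, abs_neg]
        calc δ - ε * r ≤ ⟪x - a, v⟫ + δ := by linarith
          _ ≤ |⟪x - a, v⟫ + δ| := le_abs_self _
      linarith
    have hZYlb : δ - ε * r ≤ dist Z Y := by
      have h1 : |⟪Z - Y, v⟫| ≤ ‖Z - Y‖ := by
        have := abs_real_inner_le_norm (Z - Y) v
        rwa [hv, mul_one] at this
      have h2 : ⟪Z - Y, v⟫ = ⟪Z - a, v⟫ - ⟪Y - a, v⟫ := by
        rw [← inner_sub_left]; congr 1; abel
      have h3 : ⟪Z - a, v⟫ = 0 := hZ0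
      rw [h2, h3, hhY] at h1
      rw [dist_eq_norm]
      have h5 : δ - ε * r ≤ |0 - (⟪x - a, v⟫ - δ)| := by
        rw [zero_sub, abs_neg, abs_sub_comm]
        calc δ - ε * r ≤ δ - ⟪x - a, v⟫ := by linarith
          _ ≤ |δ - ⟪x - a, v⟫| := le_abs_self _
      linarith
    have hmin : δ - ε * r ≤ min (dist Z X) (dist Z Y) := le_min hZXlb hZYlb
    have hfinal : c * (δ - ε * r) ≤ Metric.infDist Z (frontier Ω) := by
      calc c * (δ - ε * r) ≤ c * min (dist Z X) (dist Z Y) :=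
            mul_le_mul_of_nonneg_left hmin hc₀.le
        _ ≤ Metric.infDist Z (frontier Ω) := hcZ
    -- numeric contradiction: c * (δ - ε r) ≥ ε r
    have hkey : ε * r ≤ c * (δ - ε * r) := by
      rw [hδdef]
      have h1 : ε * (4 * (2 * C + 1)) < c := (lt_div_iff₀ (by linarith)).mp hεc
      rw [mul_sub]
      have h3 : ε * (4 * (2 * C + 1)) * (r / (2 * (2 * C + 1))) <
          c * (r / (2 * (2 * C + 1))) :=
        mul_lt_mul_of_pos_right h1 (by positivity)
      have h4 : ε * (4 * (2 * C + 1)) * (r / (2 * (2 * C + 1))) = 2 * (ε * r) := by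
        field_simp
        ring
      have h5 : c * (ε * r) ≤ ε * r := by
        nlinarith [mul_pos hε hr]
      linarith
    linarith
  -- conclude
  rcases hSpdich with hSpext | hSpext
  · rcases hSmdich with hSmext | hSmext
    · exact absurd ⟨hSpext, hSmext⟩ hnotboth
    · refine ⟨-1, Or.inr rfl, ?_⟩
      intro y hy
      obtain ⟨hyb, hyi⟩ := hball (-1) (Or.inr rfl) y hy
      have hySm : y ∈ Sm := ⟨hyb, by
        show ⟪y - x, v⟫ < -(2 * ε * r)
        have : (-1 : ℝ) * ⟪y - x, v⟫ = -⟪y - x, v⟫ := by ring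
        rw [this] at hyi
        linarith⟩
      exact ⟨hyb, hSmext hySm⟩
  · refine ⟨1, Or.inl rfl, ?_⟩
    intro y hy
    obtain ⟨hyb, hyi⟩ := hball 1 (Or.inl rfl) y hy
    have hySp : y ∈ Sp := ⟨hyb, by
      show 2 * ε * r < ⟪y - x, v⟫
      linarith [hyi, (one_mul (⟪y - x, v⟫)) ▸ hyi]⟩
    exact ⟨hyb, hSpext hySp⟩
end
end
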